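/- Let (D, Θ) be a quasitriangular Hopf algebra and L a left D-module algebra that is Θ-commutative, i.e. Σ (Θ⁽²⁾▷λ)(Θ⁽¹⁾▷μ) = μλ for all λ, μ ∈ L. Let u = Σ γ(Θ⁽²⁾)Θ⁽¹⁾ be the Drinfeld element of D. Then the map λ ↦ u▷λ is a unital algebra endomorphism of L. -/

import Mathlib

open TensorProduct

noncomputable section

namespace Stmt18

variable (k D L : Type*) [CommRing k] [Ring D] [HopfAlgebra k D] [Ring L] [Algebra k L]

/-- The coproduct of `D` as an algebra map. -/
def Δ : D →ₐ[k] D ⊗[k] D := Bialgebra.comulAlgHom k D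

/-- The counit of `D` as an algebra map. -/
def ε : D →ₐ[k] k := Bialgebra.counitAlgHom k D

/-- The antipode of `D`. -/
def γ : D →ₗ[k] D := HopfAlgebra.antipode (R := k)

/-- Embedding of `D ⊗ D` into legs 1,2 of `D ⊗ (D ⊗ D)`. -/
def ι12 : D ⊗[k] D →ₐ[k] D ⊗[k] (D ⊗[k] D) :=
  Algebra.TensorProduct.map (AlgHom.id k D) Algebra.TensorProduct.includeLeft

/-- Embedding of `D ⊗ D` into legs 1,3 of `D ⊗ (D ⊗ D)`. -/
def ι13 : D ⊗[k] D →ₐ[k] D ⊗[k] (D ⊗[k] D) :=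
  Algebra.TensorProduct.map (AlgHom.id k D) Algebra.TensorProduct.includeRight

/-- Embedding of `D ⊗ D` into legs 2,3 of `D ⊗ (D ⊗ D)`. -/
def ι23 : D ⊗[k] D →ₐ[k] D ⊗[k] (D ⊗[k] D) :=
  Algebra.TensorProduct.includeRight

/-- `Δ ⊗ id`, landing in `D ⊗ (D ⊗ D)`. -/
def comulId : D ⊗[k] D →ₐ[k] D ⊗[k] (D ⊗[k] D) :=
  (Algebra.TensorProduct.assoc k k k D D D).toAlgHom.comp
    (Algebra.TensorProduct.map (Δ k D) (AlgHom.id k D))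

/-- `id ⊗ Δ`, landing in `D ⊗ (D ⊗ D)`. -/
def idComul : D ⊗[k] D →ₐ[k] D ⊗[k] (D ⊗[k] D) :=
  Algebra.TensorProduct.map (AlgHom.id k D) (Δ k D)

/-- For an action `act : D →ₗ (L →ₗ L)`, the induced action of `D ⊗ D` on `L ⊗ L`. -/
def actT (act : D →ₗ[k] L →ₗ[k] L) :
    D ⊗[k] D →ₗ[k] (L ⊗[k] L →ₗ[k] L ⊗[k] L) :=
  (TensorProduct.homTensorHomMap (RingHom.id k) L L L L).comp (TensorProduct.map act act)

/-- The Drinfeld element `u = Σ γ(Θ⁽²⁾) Θ⁽¹⁾`. -/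
def uel (Θ : D ⊗[k] D) : D :=
  LinearMap.mul' k D
    ((TensorProduct.map (γ k D) LinearMap.id) ((Algebra.TensorProduct.comm k D D) Θ))

end Stmt18

namespace Stmt18Aux

open Coalgebra HopfAlgebra

variable {k D : Type*} [CommRing k] [Ring D] [HopfAlgebra k D]

/-- `x ⊗ (y ⊗ z) ↦ x * (y * z)` -/
def mul3 (k A : Type*) [CommRing k] [Ring A] [Algebra k A] :
    A ⊗[k] (A ⊗[k] A) →ₗ[k] A :=
  (LinearMap.mul' k A) ∘ₗ LinearMap.lTensor A (LinearMap.mul' k A)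

@[simp] lemma mul3_tmul (k A : Type*) [CommRing k] [Ring A] [Algebra k A] (x y z : A) :
    mul3 k A (x ⊗ₜ (y ⊗ₜ z)) = x * (y * z) := by simp [mul3]

lemma assoc3 {M : Type*} [AddCommMonoid M] [Module k M]
    (ω : D ⊗[k] (D ⊗[k] D) →ₗ[k] M) {x : D} {ι : Type*} {κ Λ : ι → Type*}
    (r : Coalgebra.Repr k x ι)
    (r1 : ∀ i : ι, Coalgebra.Repr k (r.left i) (κ i))
    (r2 : ∀ i : ι, Coalgebra.Repr k (r.right i) (Λ i)) :
    ∑ i ∈ r.index, ∑ p ∈ (r2 i).index,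
        ω (r.left i ⊗ₜ ((r2 i).left p ⊗ₜ (r2 i).right p))
      = ∑ i ∈ r.index, ∑ p ∈ (r1 i).index,
        ω ((r1 i).left p ⊗ₜ ((r1 i).right p ⊗ₜ r.right i)) := by
  have h := Coalgebra.sum_tmul_tmul_eq r r1 r2
  have h2 := congrArg ω h.symm
  simpa [map_sum] using h2

lemma sum_counit_right_smul {x : D} {ι : Type*} (r : Coalgebra.Repr k x ι) :
    ∑ i ∈ r.index, counit (R := k) (r.right i) • r.left i = x := by
  calc ∑ i ∈ r.index, counit (R := k) (r.right i) • r.left i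
      = TensorProduct.rid k D (∑ i ∈ r.index, r.left i ⊗ₜ[k] counit (R := k) (r.right i)) := by
        rw [map_sum]; simp [TensorProduct.rid_tmul]
    _ = TensorProduct.rid k D (x ⊗ₜ[k] 1) := by rw [Coalgebra.sum_tmul_counit_eq r]
    _ = x := by simp

lemma sum_counit_left_smul {x : D} {ι : Type*} (r : Coalgebra.Repr k x ι) :
    ∑ i ∈ r.index, counit (R := k) (r.left i) • r.right i = x := by
  calc ∑ i ∈ r.index, counit (R := k) (r.left i) • r.right i
      = TensorProduct.lid k D (∑ i ∈ r.index, counit (R := k) (r.left i) ⊗ₜ[k] r.right i) := by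
        rw [map_sum]; simp [TensorProduct.lid_tmul]
    _ = TensorProduct.lid k D ((1 : k) ⊗ₜ[k] x) := by rw [Coalgebra.sum_counit_tmul_eq r]
    _ = x := by simp

lemma sum_counit_counit {x : D} {ι : Type*} (r : Coalgebra.Repr k x ι) :
    ∑ i ∈ r.index, counit (R := k) (r.left i) * counit (R := k) (r.right i)
      = counit (R := k) x := by
  have h1 : ∀ i ∈ r.index, counit (R := k) (r.left i) * counit (R := k) (r.right i)
      = counit (R := k) (counit (R := k) (r.left i) • r.right i) := by
    intro i _
    rw [map_smul, smul_eq_mul]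
  rw [Finset.sum_congr rfl h1, ← map_sum, sum_counit_left_smul]

section Conv

variable (A : Type*) [Ring A] [Algebra k A]

/-- Convolution product on linear maps `D →ₗ A`. -/
def conv (f g : D →ₗ[k] A) : D →ₗ[k] A :=
  (LinearMap.mul' k A) ∘ₗ (TensorProduct.map f g) ∘ₗ (Coalgebra.comul (R := k))

/-- The convolution unit. -/
def cunit : D →ₗ[k] A := (Algebra.linearMap k A) ∘ₗ (Coalgebra.counit (R := k))

variable {A}

lemma conv_apply (f g : D →ₗ[k] A) {x : D} {ι : Type*} (r : Coalgebra.Repr k x ι) :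
    conv A f g x = ∑ i ∈ r.index, f (r.left i) * g (r.right i) := by
  simp [conv, ← r.eq, map_sum]

lemma cunit_apply (x : D) : cunit (k := k) (D := D) A x = counit (R := k) x • (1 : A) := by
  simp [cunit, Algebra.smul_def]

lemma conv_cunit_right (f : D →ₗ[k] A) : conv A f (cunit A) = f := by
  ext x
  rw [conv_apply f (cunit A) (ℛ k x)]
  have : ∀ i ∈ (ℛ k x).index, f ((ℛ k x).left i) * cunit (k := k) A ((ℛ k x).right i)
      = f (counit (R := k) ((ℛ k x).right i) • (ℛ k x).left i) := by
    intro i _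
    rw [cunit_apply, mul_smul_comm, mul_one, map_smul]
  rw [Finset.sum_congr rfl this, ← map_sum, sum_counit_right_smul]

lemma conv_cunit_left (f : D →ₗ[k] A) : conv A (cunit A) f = f := by
  ext x
  rw [conv_apply (cunit A) f (ℛ k x)]
  have : ∀ i ∈ (ℛ k x).index, cunit (k := k) A ((ℛ k x).left i) * f ((ℛ k x).right i)
      = f (counit (R := k) ((ℛ k x).left i) • (ℛ k x).right i) := by
    intro i _
    rw [cunit_apply, smul_mul_assoc, one_mul, map_smul]
  rw [Finset.sum_congr rfl this, ← map_sum, sum_counit_left_smul]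

lemma conv_assoc (f g h : D →ₗ[k] A) : conv A (conv A f g) h = conv A f (conv A g h) := by
  ext x
  set r := ℛ k x with hr
  have key := assoc3 ((mul3 k A) ∘ₗ TensorProduct.map f (TensorProduct.map g h)) r
    (fun i => ℛ k (r.left i)) (fun i => ℛ k (r.right i))
  simp only [LinearMap.coe_comp, Function.comp_apply, TensorProduct.map_tmul, mul3_tmul] at key
  rw [conv_apply (conv A f g) h r, conv_apply f (conv A g h) r]
  calc ∑ i ∈ r.index, conv A f g (r.left i) * h (r.right i)
      = ∑ i ∈ r.index, ∑ p ∈ (ℛ k (r.left i)).index,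
          f ((ℛ k (r.left i)).left p) * (g ((ℛ k (r.left i)).right p) * h (r.right i)) := by
        refine Finset.sum_congr rfl fun i _ => ?_
        rw [conv_apply f g (ℛ k (r.left i)), Finset.sum_mul]
        exact Finset.sum_congr rfl fun p _ => mul_assoc _ _ _
    _ = ∑ i ∈ r.index, ∑ p ∈ (ℛ k (r.right i)).index,
          f (r.left i) * (g ((ℛ k (r.right i)).left p) * h ((ℛ k (r.right i)).right p)) :=
        key.symm
    _ = ∑ i ∈ r.index, f (r.left i) * conv A g h (r.right i) := by
        refine Finset.sum_congr rfl fun i _ => ?_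
        rw [conv_apply g h (ℛ k (r.right i)), Finset.mul_sum]

lemma conv_inv_unique {f g h : D →ₗ[k] A}
    (h1 : conv A f h = cunit A) (h2 : conv A h g = cunit A) : f = g := by
  have := conv_assoc f h g
  rw [h1, h2, conv_cunit_left, conv_cunit_right] at this
  exact this.symm

end Conv

section Hopf

lemma antipode_one : antipode (R := k) (1 : D) = 1 := by
  have h := mul_antipode_rTensor_comul_apply (R := k) (A := D) 1
  simpa [Bialgebra.comul_one, Algebra.TensorProduct.one_def] using h

lemma counit_antipode (x : D) :
    counit (R := k) (antipode (R := k) x) = counit (R := k) x := by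
  set r := ℛ k x with hr
  have h1 : antipode (R := k) x
      = antipode (R := k) (∑ i ∈ r.index, counit (R := k) (r.right i) • r.left i) := by
    rw [sum_counit_right_smul r]
  have h2 : counit (R := k) (antipode (R := k) x)
      = ∑ i ∈ r.index, counit (R := k) (antipode (R := k) (r.left i)) * counit (R := k) (r.right i) := by
    rw [h1, map_sum, map_sum]
    refine Finset.sum_congr rfl fun i _ => ?_
    simp only [map_smul, smul_eq_mul]
    exact mul_comm _ _
  rw [h2]
  calc ∑ i ∈ r.index, counit (R := k) (antipode (R := k) (r.left i)) * counit (R := k) (r.right i)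
      = ∑ i ∈ r.index, counit (R := k) (antipode (R := k) (r.left i) * r.right i) := by
        refine Finset.sum_congr rfl fun i _ => ?_
        rw [Bialgebra.counit_mul]
    _ = counit (R := k) (∑ i ∈ r.index, antipode (R := k) (r.left i) * r.right i) := by
        rw [map_sum]
    _ = counit (R := k) x := by
        rw [sum_antipode_mul_eq_smul r, map_smul, Bialgebra.counit_one, smul_eq_mul, mul_one]

/-- Product of two representations. -/
def reprMul {a b : D} {ι κ : Type*} (ra : Coalgebra.Repr k a ι) (rb : Coalgebra.Repr k b κ) :
    Coalgebra.Repr k (a * b) (ι × κ) where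
  index := ra.index ×ˢ rb.index
  left := fun p => ra.left p.1 * rb.left p.2
  right := fun p => ra.right p.1 * rb.right p.2
  eq := by
    rw [Finset.sum_product]
    rw [Bialgebra.comul_mul, ← ra.eq, ← rb.eq, Finset.sum_mul_sum]
    simp [Algebra.TensorProduct.tmul_mul_tmul]

lemma comul_antipode (x : D) :
    Coalgebra.comul (R := k) (antipode (R := k) x)
      = (TensorProduct.comm k D D)
          (TensorProduct.map (antipode (R := k)) (antipode (R := k))
            (Coalgebra.comul (R := k) x)) := by
  set S : D →ₗ[k] D := antipode (R := k) with hSdef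
  set p1 : D →ₗ[k] D ⊗[k] D := (TensorProduct.mk k D D).flip 1 with hp1
  set p2 : D →ₗ[k] D ⊗[k] D := TensorProduct.mk k D D 1 with hp2
  have p1_apply : ∀ y : D, p1 y = y ⊗ₜ[k] 1 := fun y => rfl
  have p2_apply : ∀ y : D, p2 y = (1 : D) ⊗ₜ[k] y := fun y => rfl
  have h_p1p2 : conv (D ⊗[k] D) p1 p2 = Coalgebra.comul (R := k) := by
    ext x
    rw [conv_apply p1 p2 (ℛ k x)]
    rw [← (ℛ k x).eq]
    refine Finset.sum_congr rfl fun i _ => ?_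
    rw [p1_apply, p2_apply, Algebra.TensorProduct.tmul_mul_tmul, mul_one, one_mul]
  have h_p1q1 : conv (D ⊗[k] D) p1 (p1 ∘ₗ S) = cunit (D ⊗[k] D) := by
    ext x
    rw [conv_apply p1 (p1 ∘ₗ S) (ℛ k x), cunit_apply]
    calc ∑ i ∈ (ℛ k x).index, p1 ((ℛ k x).left i) * (p1 ∘ₗ S) ((ℛ k x).right i)
        = ∑ i ∈ (ℛ k x).index, ((ℛ k x).left i * S ((ℛ k x).right i)) ⊗ₜ[k] (1 : D) := by
          refine Finset.sum_congr rfl fun i _ => ?_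
          simp [p1_apply, Algebra.TensorProduct.tmul_mul_tmul]
      _ = (∑ i ∈ (ℛ k x).index, (ℛ k x).left i * S ((ℛ k x).right i)) ⊗ₜ[k] (1 : D) := by
          rw [TensorProduct.sum_tmul]
      _ = counit (R := k) x • (1 : D ⊗[k] D) := by
          rw [sum_mul_antipode_eq_smul (ℛ k x), Algebra.TensorProduct.one_def,
            TensorProduct.smul_tmul']
  have h_p2q2 : conv (D ⊗[k] D) p2 (p2 ∘ₗ S) = cunit (D ⊗[k] D) := by
    ext x
    rw [conv_apply p2 (p2 ∘ₗ S) (ℛ k x), cunit_apply]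
    calc ∑ i ∈ (ℛ k x).index, p2 ((ℛ k x).left i) * (p2 ∘ₗ S) ((ℛ k x).right i)
        = ∑ i ∈ (ℛ k x).index, (1 : D) ⊗ₜ[k] ((ℛ k x).left i * S ((ℛ k x).right i)) := by
          refine Finset.sum_congr rfl fun i _ => ?_
          simp [p2_apply, Algebra.TensorProduct.tmul_mul_tmul]
      _ = (1 : D) ⊗ₜ[k] (∑ i ∈ (ℛ k x).index, (ℛ k x).left i * S ((ℛ k x).right i)) := by
          rw [TensorProduct.tmul_sum]
      _ = counit (R := k) x • (1 : D ⊗[k] D) := by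
          rw [sum_mul_antipode_eq_smul (ℛ k x), Algebra.TensorProduct.one_def,
            TensorProduct.tmul_smul]
  have h_fh : conv (D ⊗[k] D) ((Coalgebra.comul (R := k)) ∘ₗ S) (Coalgebra.comul (R := k))
      = cunit (D ⊗[k] D) := by
    ext x
    rw [conv_apply _ _ (ℛ k x), cunit_apply]
    calc ∑ i ∈ (ℛ k x).index,
          ((Coalgebra.comul (R := k)) ∘ₗ S) ((ℛ k x).left i) * Coalgebra.comul ((ℛ k x).right i)
        = ∑ i ∈ (ℛ k x).index, Coalgebra.comul (R := k) (S ((ℛ k x).left i) * (ℛ k x).right i) := by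
          refine Finset.sum_congr rfl fun i _ => ?_
          rw [Bialgebra.comul_mul]; rfl
      _ = Coalgebra.comul (R := k)
            (∑ i ∈ (ℛ k x).index, S ((ℛ k x).left i) * (ℛ k x).right i) := by rw [map_sum]
      _ = counit (R := k) x • (1 : D ⊗[k] D) := by
          rw [hSdef, sum_antipode_mul_eq_smul (ℛ k x), map_smul, Bialgebra.comul_one]
  have h_hg : conv (D ⊗[k] D) (Coalgebra.comul (R := k))
      (conv (D ⊗[k] D) (p2 ∘ₗ S) (p1 ∘ₗ S)) = cunit (D ⊗[k] D) := by
    rw [← h_p1p2, conv_assoc, ← conv_assoc p2 (p2 ∘ₗ S) (p1 ∘ₗ S), h_p2q2, conv_cunit_left,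
      h_p1q1]
  have hmain : (Coalgebra.comul (R := k)) ∘ₗ S = conv (D ⊗[k] D) (p2 ∘ₗ S) (p1 ∘ₗ S) :=
    conv_inv_unique h_fh h_hg
  have := LinearMap.congr_fun hmain x
  rw [LinearMap.comp_apply, conv_apply _ _ (ℛ k x)] at this
  rw [this, ← (ℛ k x).eq]
  rw [map_sum, map_sum]
  refine Finset.sum_congr rfl fun i _ => ?_
  simp [p1_apply, p2_apply, Algebra.TensorProduct.tmul_mul_tmul]

set_option maxHeartbeats 1000000 in
lemma antipode_mul (a b : D) :
    antipode (R := k) (a * b) = antipode (R := k) b * antipode (R := k) a := by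
  classical
  set S : D →ₗ[k] D := antipode (R := k) with hS
  set ra := ℛ k a with hra
  set rb := ℛ k b with hrb
  set ra1 : ∀ i : ra.ι, Coalgebra.Repr k (ra.left i) (D × D) := fun i => ℛ k (ra.left i) with hra1
  set ra2 : ∀ i : ra.ι, Coalgebra.Repr k (ra.right i) (D × D) := fun i => ℛ k (ra.right i) with hra2
  set rb1 : ∀ j : rb.ι, Coalgebra.Repr k (rb.left j) (D × D) := fun j => ℛ k (rb.left j) with hrb1
  set rb2 : ∀ j : rb.ι, Coalgebra.Repr k (rb.right j) (D × D) := fun j => ℛ k (rb.right j) with hrb2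
  set F : D → D → D → D → D → D → D := fun x1 x2 x3 y1 y2 y3 =>
    S (x1 * y1) * ((x2 * y2) * (S y3 * S x3)) with hF
  set M1 : D := ∑ j ∈ rb.index, ∑ i ∈ ra.index, ∑ p ∈ (ra2 i).index,
      ∑ q ∈ (rb2 j).index,
        F (ra.left i) ((ra2 i).left p) ((ra2 i).right p)
          (rb.left j) ((rb2 j).left q) ((rb2 j).right q) with hM1
  set M2 : D := ∑ i ∈ ra.index, ∑ p ∈ (ra1 i).index, ∑ j ∈ rb.index,
      ∑ q ∈ (rb2 j).index,
        F ((ra1 i).left p) ((ra1 i).right p) (ra.right i)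
          (rb.left j) ((rb2 j).left q) ((rb2 j).right q) with hM2
  set M3 : D := ∑ i ∈ ra.index, ∑ j ∈ rb.index, ∑ p ∈ (ra1 i).index,
      ∑ q ∈ (rb1 j).index,
        F ((ra1 i).left p) ((ra1 i).right p) (ra.right i)
          ((rb1 j).left q) ((rb1 j).right q) (rb.right j) with hM3
  have bridge1 : M1 = M2 := by
    rw [hM1, hM2]
    calc ∑ j ∈ rb.index, ∑ i ∈ ra.index, ∑ p ∈ (ra2 i).index, ∑ q ∈ (rb2 j).index,
          F (ra.left i) ((ra2 i).left p) ((ra2 i).right p)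
            (rb.left j) ((rb2 j).left q) ((rb2 j).right q)
        = ∑ j ∈ rb.index, ∑ q ∈ (rb2 j).index, ∑ i ∈ ra.index, ∑ p ∈ (ra2 i).index,
          F (ra.left i) ((ra2 i).left p) ((ra2 i).right p)
            (rb.left j) ((rb2 j).left q) ((rb2 j).right q) :=
          Finset.sum_congr rfl fun j _ =>
            (Finset.sum_congr rfl fun i _ => Finset.sum_comm).trans Finset.sum_comm
      _ = ∑ j ∈ rb.index, ∑ q ∈ (rb2 j).index, ∑ i ∈ ra.index, ∑ p ∈ (ra1 i).index,
          F ((ra1 i).left p) ((ra1 i).right p) (ra.right i)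
            (rb.left j) ((rb2 j).left q) ((rb2 j).right q) := by
          refine Finset.sum_congr rfl fun j _ => Finset.sum_congr rfl fun q _ => ?_
          have h3 := assoc3 ((mul3 k D) ∘ₗ TensorProduct.map
              (S ∘ₗ LinearMap.mulRight k (rb.left j))
              (TensorProduct.map (LinearMap.mulRight k ((rb2 j).left q))
                ((LinearMap.mulLeft k (S ((rb2 j).right q))) ∘ₗ S)))
            ra ra1 ra2
          simpa [hF, LinearMap.mulRight_apply, LinearMap.mulLeft_apply] using h3
      _ = ∑ j ∈ rb.index, ∑ i ∈ ra.index, ∑ p ∈ (ra1 i).index, ∑ q ∈ (rb2 j).index,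
          F ((ra1 i).left p) ((ra1 i).right p) (ra.right i)
            (rb.left j) ((rb2 j).left q) ((rb2 j).right q) :=
          Finset.sum_congr rfl fun j _ =>
            Finset.sum_comm.trans (Finset.sum_congr rfl fun i _ => Finset.sum_comm)
      _ = ∑ i ∈ ra.index, ∑ j ∈ rb.index, ∑ p ∈ (ra1 i).index, ∑ q ∈ (rb2 j).index,
          F ((ra1 i).left p) ((ra1 i).right p) (ra.right i)
            (rb.left j) ((rb2 j).left q) ((rb2 j).right q) := Finset.sum_comm
      _ = ∑ i ∈ ra.index, ∑ p ∈ (ra1 i).index, ∑ j ∈ rb.index, ∑ q ∈ (rb2 j).index,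
          F ((ra1 i).left p) ((ra1 i).right p) (ra.right i)
            (rb.left j) ((rb2 j).left q) ((rb2 j).right q) :=
          Finset.sum_congr rfl fun i _ => Finset.sum_comm
  have bridge2 : M2 = M3 := by
    rw [hM2, hM3]
    refine Finset.sum_congr rfl fun i _ => ?_
    calc ∑ p ∈ (ra1 i).index, ∑ j ∈ rb.index, ∑ q ∈ (rb2 j).index,
          F ((ra1 i).left p) ((ra1 i).right p) (ra.right i)
            (rb.left j) ((rb2 j).left q) ((rb2 j).right q)
        = ∑ p ∈ (ra1 i).index, ∑ j ∈ rb.index, ∑ q ∈ (rb1 j).index,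
          F ((ra1 i).left p) ((ra1 i).right p) (ra.right i)
            ((rb1 j).left q) ((rb1 j).right q) (rb.right j) := by
          refine Finset.sum_congr rfl fun p _ => ?_
          have h3 := assoc3 ((mul3 k D) ∘ₗ TensorProduct.map
              (S ∘ₗ LinearMap.mulLeft k ((ra1 i).left p))
              (TensorProduct.map (LinearMap.mulLeft k ((ra1 i).right p))
                ((LinearMap.mulRight k (S (ra.right i))) ∘ₗ S)))
            rb rb1 rb2
          simpa [hF, LinearMap.mulRight_apply, LinearMap.mulLeft_apply] using h3
      _ = ∑ j ∈ rb.index, ∑ p ∈ (ra1 i).index, ∑ q ∈ (rb1 j).index,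
          F ((ra1 i).left p) ((ra1 i).right p) (ra.right i)
            ((rb1 j).left q) ((rb1 j).right q) (rb.right j) := Finset.sum_comm
  have way1 : M1 = S (a * b) := by
    rw [hM1]
    have hcollapse : ∀ j ∈ rb.index, ∀ i ∈ ra.index,
        (∑ p ∈ (ra2 i).index, ∑ q ∈ (rb2 j).index,
          F (ra.left i) ((ra2 i).left p) ((ra2 i).right p)
            (rb.left j) ((rb2 j).left q) ((rb2 j).right q))
        = counit (R := k) (rb.right j) •
            (counit (R := k) (ra.right i) • S (ra.left i * rb.left j)) := by
      intro j _ i _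
      have hq : ∀ p ∈ (ra2 i).index,
          (∑ q ∈ (rb2 j).index,
            F (ra.left i) ((ra2 i).left p) ((ra2 i).right p)
              (rb.left j) ((rb2 j).left q) ((rb2 j).right q))
          = counit (R := k) (rb.right j) •
              (S (ra.left i * rb.left j) * ((ra2 i).left p * S ((ra2 i).right p))) := by
        intro p _
        have h1 : ∀ q ∈ (rb2 j).index,
            F (ra.left i) ((ra2 i).left p) ((ra2 i).right p)
              (rb.left j) ((rb2 j).left q) ((rb2 j).right q)
            = S (ra.left i * rb.left j) *
                ((ra2 i).left p *
                  (((rb2 j).left q * S ((rb2 j).right q)) * S ((ra2 i).right p))) := by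
          intro q _
          simp only [hF]
          rw [mul_assoc ((ra2 i).left p), ← mul_assoc ((rb2 j).left q)]
        rw [Finset.sum_congr rfl h1]
        rw [← Finset.mul_sum, ← Finset.mul_sum, ← Finset.sum_mul]
        rw [hS, sum_mul_antipode_eq_smul (rb2 j)]
        rw [smul_mul_assoc, one_mul, mul_smul_comm, mul_smul_comm]
      rw [Finset.sum_congr rfl hq, ← Finset.smul_sum, ← Finset.mul_sum]
      rw [hS, sum_mul_antipode_eq_smul (ra2 i)]
      rw [mul_smul_comm, mul_one]
    rw [Finset.sum_congr rfl fun j hj => Finset.sum_congr rfl fun i hi => hcollapse j hj i hi]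
    have expand : S ((∑ i ∈ ra.index, counit (R := k) (ra.right i) • ra.left i) *
          (∑ j ∈ rb.index, counit (R := k) (rb.right j) • rb.left j))
        = ∑ i ∈ ra.index, ∑ j ∈ rb.index, counit (R := k) (ra.right i) •
            (counit (R := k) (rb.right j) • S (ra.left i * rb.left j)) := by
      rw [Finset.sum_mul_sum, map_sum]
      refine Finset.sum_congr rfl fun i _ => ?_
      rw [map_sum]
      refine Finset.sum_congr rfl fun j _ => ?_
      rw [smul_mul_assoc, mul_smul_comm, map_smul, map_smul]
    calc ∑ j ∈ rb.index, ∑ i ∈ ra.index, counit (R := k) (rb.right j) •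
            (counit (R := k) (ra.right i) • S (ra.left i * rb.left j))
        = ∑ i ∈ ra.index, ∑ j ∈ rb.index, counit (R := k) (ra.right i) •
            (counit (R := k) (rb.right j) • S (ra.left i * rb.left j)) :=
          Finset.sum_comm.trans (Finset.sum_congr rfl fun i _ =>
            Finset.sum_congr rfl fun j _ => smul_comm _ _ _)
      _ = S ((∑ i ∈ ra.index, counit (R := k) (ra.right i) • ra.left i) *
            (∑ j ∈ rb.index, counit (R := k) (rb.right j) • rb.left j)) := expand.symm
      _ = S (a * b) := by rw [sum_counit_right_smul ra, sum_counit_right_smul rb]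
  have way2 : M3 = S b * S a := by
    rw [hM3]
    have hcollapse : ∀ i ∈ ra.index, ∀ j ∈ rb.index,
        (∑ p ∈ (ra1 i).index, ∑ q ∈ (rb1 j).index,
          F ((ra1 i).left p) ((ra1 i).right p) (ra.right i)
            ((rb1 j).left q) ((rb1 j).right q) (rb.right j))
        = (counit (R := k) (ra.left i) * counit (R := k) (rb.left j)) •
            (S (rb.right j) * S (ra.right i)) := by
      intro i _ j _
      have h1 : ∀ p ∈ (ra1 i).index, ∀ q ∈ (rb1 j).index,
          F ((ra1 i).left p) ((ra1 i).right p) (ra.right i)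
            ((rb1 j).left q) ((rb1 j).right q) (rb.right j)
          = (S ((ra1 i).left p * (rb1 j).left q) * ((ra1 i).right p * (rb1 j).right q)) *
              (S (rb.right j) * S (ra.right i)) := by
        intro p _ q _
        simp only [hF]
        rw [← mul_assoc]
      rw [Finset.sum_congr rfl fun p hp => Finset.sum_congr rfl fun q hq => h1 p hp q hq]
      have hstep : ∑ p ∈ (ra1 i).index, ∑ q ∈ (rb1 j).index,
          (S ((ra1 i).left p * (rb1 j).left q) * ((ra1 i).right p * (rb1 j).right q)) *
            (S (rb.right j) * S (ra.right i))
          = (∑ p ∈ (ra1 i).index, ∑ q ∈ (rb1 j).index,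
              S ((ra1 i).left p * (rb1 j).left q) * ((ra1 i).right p * (rb1 j).right q)) *
            (S (rb.right j) * S (ra.right i)) := by
        rw [Finset.sum_mul]
        exact Finset.sum_congr rfl fun p _ => (Finset.sum_mul _ _ _).symm
      rw [hstep]
      have h2 := sum_antipode_mul_eq_smul (reprMul (ra1 i) (rb1 j))
      simp only [reprMul] at h2
      rw [Finset.sum_product] at h2
      rw [hS, h2, smul_mul_assoc, one_mul, Bialgebra.counit_mul]
    rw [Finset.sum_congr rfl fun i hi => Finset.sum_congr rfl fun j hj => hcollapse i hi j hj]
    have hbS : (∑ j ∈ rb.index, counit (R := k) (rb.left j) • S (rb.right j)) = S b := by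
      have h4 : ∀ j ∈ rb.index, counit (R := k) (rb.left j) • S (rb.right j)
          = S (counit (R := k) (rb.left j) • rb.right j) := fun j _ => (map_smul S _ _).symm
      rw [Finset.sum_congr rfl h4, ← map_sum, sum_counit_left_smul]
    have haS : (∑ i ∈ ra.index, counit (R := k) (ra.left i) • S (ra.right i)) = S a := by
      have h4 : ∀ i ∈ ra.index, counit (R := k) (ra.left i) • S (ra.right i)
          = S (counit (R := k) (ra.left i) • ra.right i) := fun i _ => (map_smul S _ _).symm
      rw [Finset.sum_congr rfl h4, ← map_sum, sum_counit_left_smul]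
    calc ∑ i ∈ ra.index, ∑ j ∈ rb.index,
            (counit (R := k) (ra.left i) * counit (R := k) (rb.left j)) •
              (S (rb.right j) * S (ra.right i))
        = ∑ j ∈ rb.index, ∑ i ∈ ra.index,
            (counit (R := k) (rb.left j) • S (rb.right j)) *
              (counit (R := k) (ra.left i) • S (ra.right i)) := by
          rw [Finset.sum_comm]
          refine Finset.sum_congr rfl fun j _ => Finset.sum_congr rfl fun i _ => ?_
          rw [smul_mul_assoc, mul_smul_comm, smul_smul, mul_comm]
      _ = (∑ j ∈ rb.index, counit (R := k) (rb.left j) • S (rb.right j)) *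
            (∑ i ∈ ra.index, counit (R := k) (ra.left i) • S (ra.right i)) :=
          (Finset.sum_mul_sum _ _ _ _).symm
      _ = S b * S a := by rw [hbS, haS]
  rw [← way1, bridge1, bridge2, way2]

end Hopf

end Stmt18Aux


namespace Stmt18

variable (k D L : Type*) [CommRing k] [Ring D] [HopfAlgebra k D] [Ring L] [Algebra k L]

/-- `ε` on the left tensor factor. -/
def epsL : D ⊗[k] D →ₐ[k] D :=
  (Algebra.TensorProduct.lid k D).toAlgHom.comp
    (Algebra.TensorProduct.map (ε k D) (AlgHom.id k D))

/-- `ε` on the right tensor factor. -/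
def epsR : D ⊗[k] D →ₐ[k] D :=
  (Algebra.TensorProduct.rid k k D).toAlgHom.comp
    (Algebra.TensorProduct.map (AlgHom.id k D) (ε k D))

@[simp] lemma epsL_tmul (x y : D) : epsL k D (x ⊗ₜ[k] y) = ε k D x • y := by
  simp [epsL]

@[simp] lemma epsR_tmul (x y : D) : epsR k D (x ⊗ₜ[k] y) = ε k D y • x := by
  simp [epsR]

set_option maxHeartbeats 4000000

/-- Let `(D, Θ)` be a quasitriangular Hopf algebra and `L` a left
`D`-module algebra that is `Θ`-commutative: `Σ (Θ⁽²⁾▷λ)(Θ⁽¹⁾▷μ) = μλ`. Then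
`λ ↦ u▷λ`, with `u` the Drinfeld element, is a unital algebra endomorphism of `L`. -/
theorem drinfeld_element_acts_as_endomorphism
    (Θ Θinv : D ⊗[k] D)
    (hΘinv : Θ * Θinv = 1) (hΘinv' : Θinv * Θ = 1)
    (hcom : ∀ x : D, Θ * Δ k D x = (Algebra.TensorProduct.comm k D D) (Δ k D x) * Θ)
    (hΘ1 : comulId k D Θ = ι13 k D Θ * ι23 k D Θ)
    (hΘ2 : idComul k D Θ = ι13 k D Θ * ι12 k D Θ)
    (act : D →ₗ[k] L →ₗ[k] L)
    (hone : ∀ a : L, act 1 a = a)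
    (hmul : ∀ g h : D, ∀ a : L, act (g * h) a = act g (act h a))
    (hunit : ∀ h : D, act h (1 : L) = ε k D h • (1 : L))
    (hdistr : ∀ h : D, ∀ a b : L,
      act h (a * b) = LinearMap.mul' k L (actT k D L act (Δ k D h) (a ⊗ₜ[k] b)))
    (hΘcomm : ∀ lam mu : L,
      LinearMap.mul' k L
        (actT k D L act ((Algebra.TensorProduct.comm k D D) Θ) (lam ⊗ₜ[k] mu))
        = mu * lam) :
    act (uel k D Θ) (1 : L) = 1 ∧
      ∀ lam mu : L,
        act (uel k D Θ) (lam * mu) = act (uel k D Θ) lam * act (uel k D Θ) mu := by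
  classical
  set u := uel k D Θ with hu_def
  set τ := Algebra.TensorProduct.comm k D D with hτ
  have hγ : γ k D = HopfAlgebra.antipode (R := k) (A := D) := rfl
  have hΔapp : ∀ x : D, Δ k D x = Coalgebra.comul (R := k) x := fun _ => rfl
  have hεapp : ∀ x : D, ε k D x = Coalgebra.counit (R := k) x := fun _ => rfl
  have commEq : ∀ Z : D ⊗[k] D, τ Z = (TensorProduct.comm k D D) Z := by
    intro Z
    induction Z using TensorProduct.induction_on with
    | zero => simp
    | tmul x y => simp [hτ, Algebra.TensorProduct.comm_tmul]
    | add x y hx hy =>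
        simp only [map_add, LinearMap.add_apply, add_mul, mul_add, TensorProduct.add_tmul,
          TensorProduct.tmul_add, smul_add]
        rw [hx, hy]
  have hττ : ∀ Z : D ⊗[k] D, τ (τ Z) = Z := by
    intro Z
    induction Z using TensorProduct.induction_on with
    | zero => simp
    | tmul x y => simp [hτ, Algebra.TensorProduct.comm_tmul]
    | add x y hx hy =>
        simp only [map_add, LinearMap.add_apply, add_mul, mul_add, TensorProduct.add_tmul,
          TensorProduct.tmul_add, smul_add]
        rw [hx, hy]
  have hcommcomm : ∀ Z : L ⊗[k] L,
      (TensorProduct.comm k L L) ((TensorProduct.comm k L L) Z) = Z := by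
    intro Z
    induction Z using TensorProduct.induction_on with
    | zero => simp
    | tmul x y => simp
    | add x y hx hy =>
        simp only [map_add, LinearMap.add_apply, add_mul, mul_add, TensorProduct.add_tmul,
          TensorProduct.tmul_add, smul_add]
        rw [hx, hy]
  have hSmul : ∀ x y : D, γ k D (x * y) = γ k D y * γ k D x := by
    intro x y; rw [hγ]; exact Stmt18Aux.antipode_mul x y
  have hS1 : γ k D (1 : D) = 1 := by rw [hγ]; exact Stmt18Aux.antipode_one
  have hSε : ∀ x : D, ε k D (γ k D x) = ε k D x := by
    intro x; rw [hεapp, hεapp, hγ]; exact Stmt18Aux.counit_antipode x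
  have hH4 : ∀ y : D, Coalgebra.comul (R := k) (γ k D y)
      = (TensorProduct.comm k D D)
          (TensorProduct.map (γ k D) (γ k D) (Coalgebra.comul (R := k) y)) := by
    intro y; rw [hγ]; exact Stmt18Aux.comul_antipode y
  -- ## Step 1 : counit of the legs of Θ
  set K1 : D ⊗[k] (D ⊗[k] D) →ₐ[k] D :=
    (epsL k D).comp (Algebra.TensorProduct.map (AlgHom.id k D) (epsL k D)) with hK1
  have hK1_tmul : ∀ (x : D) (w : D ⊗[k] D), K1 (x ⊗ₜ[k] w) = ε k D x • epsL k D w := by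
    intro x w; simp [hK1]
  have hcomulId_tmul : ∀ x y : D,
      comulId k D (x ⊗ₜ[k] y)
        = (Algebra.TensorProduct.assoc k k k D D D) ((Δ k D x) ⊗ₜ[k] y) := by
    intro x y; simp [comulId]
  have hidComul_tmul : ∀ x y : D, idComul k D (x ⊗ₜ[k] y) = x ⊗ₜ[k] (Δ k D y) := by
    intro x y; simp [idComul]
  have hι13_tmul : ∀ x y : D, ι13 k D (x ⊗ₜ[k] y) = x ⊗ₜ[k] ((1 : D) ⊗ₜ[k] y) := by
    intro x y; simp [ι13]
  have hι23_tmul : ∀ x y : D, ι23 k D (x ⊗ₜ[k] y) = (1 : D) ⊗ₜ[k] (x ⊗ₜ[k] y) := by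
    intro x y; simp [ι23]
  have hι12_tmul : ∀ x y : D, ι12 k D (x ⊗ₜ[k] y) = x ⊗ₜ[k] (y ⊗ₜ[k] (1 : D)) := by
    intro x y; simp [ι12]
  have hK1comulId : ∀ Z : D ⊗[k] D, K1 (comulId k D Z) = epsL k D Z := by
    intro Z
    induction Z using TensorProduct.induction_on with
    | zero => simp
    | add x y hx hy =>
        simp only [map_add, LinearMap.add_apply, add_mul, mul_add, TensorProduct.add_tmul,
          TensorProduct.tmul_add, smul_add]
        rw [hx, hy]
    | tmul x y =>
      rw [hcomulId_tmul, hΔapp, ← (Coalgebra.Repr.arbitrary k x).eq, TensorProduct.sum_tmul, map_sum, map_sum]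
      have e1 : ∀ i ∈ (Coalgebra.Repr.arbitrary k x).index,
          K1 ((Algebra.TensorProduct.assoc k k k D D D)
              (((Coalgebra.Repr.arbitrary k x).left i ⊗ₜ[k] (Coalgebra.Repr.arbitrary k x).right i) ⊗ₜ[k] y))
          = (ε k D ((Coalgebra.Repr.arbitrary k x).left i) * ε k D ((Coalgebra.Repr.arbitrary k x).right i)) • y := by
        intro i _
        rw [Algebra.TensorProduct.assoc_tmul, hK1_tmul, epsL_tmul, smul_smul]
      rw [Finset.sum_congr rfl e1, ← Finset.sum_smul]
      have e2 : ∑ i ∈ (Coalgebra.Repr.arbitrary k x).index,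
          ε k D ((Coalgebra.Repr.arbitrary k x).left i) * ε k D ((Coalgebra.Repr.arbitrary k x).right i) = ε k D x := by
        simp only [hεapp]
        exact Stmt18Aux.sum_counit_counit (Coalgebra.Repr.arbitrary k x)
      rw [e2, epsL_tmul]
  have hK1ι13 : ∀ X : D ⊗[k] D, K1 (ι13 k D X) = epsL k D X := by
    intro X
    induction X using TensorProduct.induction_on with
    | zero => simp
    | add x y hx hy =>
        simp only [map_add, LinearMap.add_apply, add_mul, mul_add, TensorProduct.add_tmul,
          TensorProduct.tmul_add, smul_add]
        rw [hx, hy]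
    | tmul x y => rw [hι13_tmul, hK1_tmul, epsL_tmul, epsL_tmul]; simp
  have hK1ι23 : ∀ X : D ⊗[k] D, K1 (ι23 k D X) = epsL k D X := by
    intro X
    induction X using TensorProduct.induction_on with
    | zero => simp
    | add x y hx hy =>
        simp only [map_add, LinearMap.add_apply, add_mul, mul_add, TensorProduct.add_tmul,
          TensorProduct.tmul_add, smul_add]
        rw [hx, hy]
    | tmul x y => rw [hι23_tmul, hK1_tmul]; simp
  have idem_one : ∀ e f : D, e = e * e → e * f = 1 → e = 1 := by
    intro e f h1 h2
    calc e = e * 1 := (mul_one e).symm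
      _ = e * (e * f) := by rw [h2]
      _ = (e * e) * f := (mul_assoc _ _ _).symm
      _ = e * f := by rw [← h1]
      _ = 1 := h2
  have hepsL : epsL k D Θ = 1 := by
    refine idem_one _ (epsL k D Θinv) ?_ ?_
    · have h0 := congrArg K1 hΘ1
      rw [hK1comulId, map_mul, hK1ι13, hK1ι23] at h0
      exact h0
    · rw [← map_mul, hΘinv, map_one]
  set K2 : D ⊗[k] (D ⊗[k] D) →ₐ[k] D :=
    (Algebra.TensorProduct.rid k k D).toAlgHom.comp
      (Algebra.TensorProduct.map (AlgHom.id k D) ((ε k D).comp (epsL k D))) with hK2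
  have hK2_tmul : ∀ (x : D) (w : D ⊗[k] D), K2 (x ⊗ₜ[k] w) = ε k D (epsL k D w) • x := by
    intro x w; simp [hK2]
  have hK2idComul : ∀ Z : D ⊗[k] D, K2 (idComul k D Z) = epsR k D Z := by
    intro Z
    induction Z using TensorProduct.induction_on with
    | zero => simp
    | add x y hx hy =>
        simp only [map_add, LinearMap.add_apply, add_mul, mul_add, TensorProduct.add_tmul,
          TensorProduct.tmul_add, smul_add]
        rw [hx, hy]
    | tmul x y =>
      rw [hidComul_tmul, hK2_tmul, hΔapp, ← (Coalgebra.Repr.arbitrary k y).eq, map_sum, epsR_tmul]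
      congr 1
      have e1 : ∀ i ∈ (Coalgebra.Repr.arbitrary k y).index,
          ε k D (epsL k D ((Coalgebra.Repr.arbitrary k y).left i ⊗ₜ[k] (Coalgebra.Repr.arbitrary k y).right i))
          = ε k D ((Coalgebra.Repr.arbitrary k y).left i) * ε k D ((Coalgebra.Repr.arbitrary k y).right i) := by
        intro i _
        rw [epsL_tmul, map_smul, smul_eq_mul]
      rw [map_sum, Finset.sum_congr rfl e1]
      simp only [hεapp]
      exact Stmt18Aux.sum_counit_counit (Coalgebra.Repr.arbitrary k y)
  have hK2ι13 : ∀ X : D ⊗[k] D, K2 (ι13 k D X) = epsR k D X := by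
    intro X
    induction X using TensorProduct.induction_on with
    | zero => simp
    | add x y hx hy =>
        simp only [map_add, LinearMap.add_apply, add_mul, mul_add, TensorProduct.add_tmul,
          TensorProduct.tmul_add, smul_add]
        rw [hx, hy]
    | tmul x y => rw [hι13_tmul, hK2_tmul, epsL_tmul, epsR_tmul]; simp
  have hK2ι12 : ∀ X : D ⊗[k] D, K2 (ι12 k D X) = epsR k D X := by
    intro X
    induction X using TensorProduct.induction_on with
    | zero => simp
    | add x y hx hy =>
        simp only [map_add, LinearMap.add_apply, add_mul, mul_add, TensorProduct.add_tmul,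
          TensorProduct.tmul_add, smul_add]
        rw [hx, hy]
    | tmul x y => rw [hι12_tmul, hK2_tmul, epsL_tmul, epsR_tmul]; simp
  have hepsR : epsR k D Θ = 1 := by
    refine idem_one _ (epsR k D Θinv) ?_ ?_
    · have h0 := congrArg K2 hΘ2
      rw [hK2idComul, map_mul, hK2ι13, hK2ι12] at h0
      exact h0
    · rw [← map_mul, hΘinv, map_one]
  have hepsRinv : epsR k D Θinv = 1 := by
    have h0 : (1 : D) = epsR k D Θ * epsR k D Θinv := by rw [← map_mul, hΘinv, map_one]
    rw [hepsR, one_mul] at h0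
    exact h0.symm
  -- ## Step 2 : Ψ₂ and (γ ⊗ id) Θ = Θinv
  set Ψ₂ : D ⊗[k] D →ₗ[k] D :=
    (LinearMap.mul' k D) ∘ₗ (TensorProduct.map (γ k D) LinearMap.id) ∘ₗ
      (TensorProduct.comm k D D).toLinearMap with hΨ₂
  have Ψ₂_tmul : ∀ x y : D, Ψ₂ (x ⊗ₜ[k] y) = γ k D y * x := by
    intro x y; simp [hΨ₂]
  have hu : u = Ψ₂ Θ := by
    rw [hu_def, uel, ← hτ, commEq Θ]
    simp [hΨ₂]
  set SmulL : D ⊗[k] D →ₗ[k] D :=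
    (LinearMap.mul' k D) ∘ₗ (TensorProduct.map (γ k D) LinearMap.id) with hSmulL
  have SmulL_tmul : ∀ x y : D, SmulL (x ⊗ₜ[k] y) = γ k D x * y := by
    intro x y; simp [hSmulL]
  have hSmulLΔ : ∀ x : D, SmulL (Δ k D x) = ε k D x • 1 := by
    intro x
    rw [hΔapp, ← (Coalgebra.Repr.arbitrary k x).eq, map_sum]
    rw [Finset.sum_congr rfl fun i _ => SmulL_tmul _ _]
    simp only [hγ, hεapp]
    exact HopfAlgebra.sum_antipode_mul_eq_smul (Coalgebra.Repr.arbitrary k x)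
  set Ψ₃ : D ⊗[k] (D ⊗[k] D) →ₗ[k] D ⊗[k] D :=
    (TensorProduct.map SmulL LinearMap.id) ∘ₗ
      (TensorProduct.assoc k D D D).symm.toLinearMap with hΨ₃
  have hΨ₃assoc : ∀ (w : D ⊗[k] D) (z : D),
      Ψ₃ ((Algebra.TensorProduct.assoc k k k D D D) (w ⊗ₜ[k] z)) = (SmulL w) ⊗ₜ[k] z := by
    intro w z
    induction w using TensorProduct.induction_on with
    | zero => simp
    | add x y hx hy =>
        simp only [map_add, LinearMap.add_apply, add_mul, mul_add, TensorProduct.add_tmul,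
          TensorProduct.tmul_add, smul_add]
        rw [hx, hy]
    | tmul a b =>
      rw [Algebra.TensorProduct.assoc_tmul]
      simp [hΨ₃]
  have hΨ₃comulId : ∀ Z : D ⊗[k] D,
      Ψ₃ (comulId k D Z) = (TensorProduct.map
        ((Algebra.linearMap k D) ∘ₗ (ε k D).toLinearMap) LinearMap.id) Z := by
    intro Z
    induction Z using TensorProduct.induction_on with
    | zero => simp
    | add x y hx hy =>
        simp only [map_add, LinearMap.add_apply, add_mul, mul_add, TensorProduct.add_tmul,
          TensorProduct.tmul_add, smul_add]
        rw [hx, hy]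
    | tmul x y =>
      rw [hcomulId_tmul, hΨ₃assoc, hSmulLΔ, TensorProduct.map_tmul]
      simp [Algebra.algebraMap_eq_smul_one, TensorProduct.smul_tmul']
  have hΨ₃ι : ∀ X Y : D ⊗[k] D,
      Ψ₃ (ι13 k D X * ι23 k D Y) = (TensorProduct.map (γ k D) LinearMap.id X) * Y := by
    intro X Y
    induction X using TensorProduct.induction_on with
    | zero => simp [zero_mul]
    | add x y hx hy =>
        simp only [map_add, LinearMap.add_apply, add_mul, mul_add, TensorProduct.add_tmul,
          TensorProduct.tmul_add, smul_add]
        rw [hx, hy]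
    | tmul a b =>
      induction Y using TensorProduct.induction_on with
      | zero => simp [mul_zero]
      | add x y hx hy =>
          simp only [map_add, LinearMap.add_apply, add_mul, mul_add, TensorProduct.add_tmul,
            TensorProduct.tmul_add, smul_add]
          rw [hx, hy]
      | tmul c d =>
        rw [hι13_tmul, hι23_tmul, Algebra.TensorProduct.tmul_mul_tmul,
          Algebra.TensorProduct.tmul_mul_tmul, one_mul, mul_one,
          TensorProduct.map_tmul, Algebra.TensorProduct.tmul_mul_tmul]
        have e1 : Ψ₃ (a ⊗ₜ[k] (c ⊗ₜ[k] (b * d)))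
            = (γ k D a * c) ⊗ₜ[k] (b * d) := by
          simp [hΨ₃, SmulL_tmul]
        rw [e1]
        simp
  have hSidΘmul : (TensorProduct.map (γ k D) LinearMap.id) Θ * Θ = 1 := by
    have h0 := congrArg Ψ₃ hΘ1
    rw [hΨ₃comulId, hΨ₃ι] at h0
    rw [← h0]
    have e1 : ∀ Z : D ⊗[k] D,
        (TensorProduct.map ((Algebra.linearMap k D) ∘ₗ (ε k D).toLinearMap) LinearMap.id) Z
          = (1 : D) ⊗ₜ[k] (epsL k D Z) := by
      intro Z
      induction Z using TensorProduct.induction_on with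
      | zero => simp
      | add x y hx hy =>
          simp only [map_add, LinearMap.add_apply, add_mul, mul_add, TensorProduct.add_tmul,
            TensorProduct.tmul_add, smul_add]
          rw [hx, hy]
      | tmul x y =>
        rw [TensorProduct.map_tmul, epsL_tmul]
        simp [Algebra.algebraMap_eq_smul_one, TensorProduct.smul_tmul']
    rw [e1, hepsL, Algebra.TensorProduct.one_def]
  have hSid : (TensorProduct.map (γ k D) LinearMap.id) Θ = Θinv := by
    calc (TensorProduct.map (γ k D) LinearMap.id) Θ
        = (TensorProduct.map (γ k D) LinearMap.id) Θ * (Θ * Θinv) := by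
          rw [hΘinv, mul_one]
      _ = ((TensorProduct.map (γ k D) LinearMap.id) Θ * Θ) * Θinv := (mul_assoc _ _ _).symm
      _ = Θinv := by rw [hSidΘmul, one_mul]
  -- ## Step 3 : (id ⊗ γ) Θinv = Θ and (γ ⊗ γ) Θ = Θ
  have hidΘinv : idComul k D Θinv = ι12 k D Θinv * ι13 k D Θinv := by
    have h1 : idComul k D Θ * idComul k D Θinv = 1 := by rw [← map_mul, hΘinv, map_one]
    have h2 : (ι12 k D Θinv * ι13 k D Θinv) * (ι13 k D Θ * ι12 k D Θ) = 1 := by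
      calc (ι12 k D Θinv * ι13 k D Θinv) * (ι13 k D Θ * ι12 k D Θ)
          = ι12 k D Θinv * ((ι13 k D Θinv * ι13 k D Θ) * ι12 k D Θ) := by
            rw [mul_assoc, ← mul_assoc (ι13 k D Θinv)]
        _ = ι12 k D Θinv * ι12 k D Θ := by rw [← map_mul, hΘinv', map_one, one_mul]
        _ = 1 := by rw [← map_mul, hΘinv', map_one]
    calc idComul k D Θinv = 1 * idComul k D Θinv := (one_mul _).symm
      _ = ((ι12 k D Θinv * ι13 k D Θinv) * (ι13 k D Θ * ι12 k D Θ)) * idComul k D Θinv := by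
          rw [h2]
      _ = (ι12 k D Θinv * ι13 k D Θinv) * ((ι13 k D Θ * ι12 k D Θ) * idComul k D Θinv) :=
          mul_assoc _ _ _
      _ = (ι12 k D Θinv * ι13 k D Θinv) * (idComul k D Θ * idComul k D Θinv) := by rw [hΘ2]
      _ = ι12 k D Θinv * ι13 k D Θinv := by rw [h1, mul_one]
  set Ψ₄ : D ⊗[k] (D ⊗[k] D) →ₗ[k] D ⊗[k] D :=
    TensorProduct.map LinearMap.id SmulL with hΨ₄
  have hΨ₄idComul : ∀ Z : D ⊗[k] D,
      Ψ₄ (idComul k D Z) = (TensorProduct.map LinearMap.id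
        ((Algebra.linearMap k D) ∘ₗ (ε k D).toLinearMap)) Z := by
    intro Z
    induction Z using TensorProduct.induction_on with
    | zero => simp
    | add x y hx hy =>
        simp only [map_add, LinearMap.add_apply, add_mul, mul_add, TensorProduct.add_tmul,
          TensorProduct.tmul_add, smul_add]
        rw [hx, hy]
    | tmul x y =>
      rw [hidComul_tmul, hΨ₄, TensorProduct.map_tmul, hSmulLΔ, TensorProduct.map_tmul]
      simp [Algebra.algebraMap_eq_smul_one]
  have hΨ₄ι : ∀ X Y : D ⊗[k] D,
      Ψ₄ (ι12 k D X * ι13 k D Y) = (TensorProduct.map LinearMap.id (γ k D) X) * Y := by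
    intro X Y
    induction X using TensorProduct.induction_on with
    | zero => simp [zero_mul]
    | add x y hx hy =>
        simp only [map_add, LinearMap.add_apply, add_mul, mul_add, TensorProduct.add_tmul,
          TensorProduct.tmul_add, smul_add]
        rw [hx, hy]
    | tmul a b =>
      induction Y using TensorProduct.induction_on with
      | zero => simp [mul_zero]
      | add x y hx hy =>
          simp only [map_add, LinearMap.add_apply, add_mul, mul_add, TensorProduct.add_tmul,
            TensorProduct.tmul_add, smul_add]
          rw [hx, hy]
      | tmul c d =>
        rw [hι12_tmul, hι13_tmul, Algebra.TensorProduct.tmul_mul_tmul,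
          Algebra.TensorProduct.tmul_mul_tmul, one_mul, mul_one, hΨ₄]
        simp [SmulL_tmul, Algebra.TensorProduct.tmul_mul_tmul]
  have hidSinv : (TensorProduct.map LinearMap.id (γ k D)) Θinv = Θ := by
    have h0 := congrArg Ψ₄ hidΘinv
    rw [hΨ₄idComul, hΨ₄ι] at h0
    have e1 : ∀ Z : D ⊗[k] D,
        (TensorProduct.map LinearMap.id ((Algebra.linearMap k D) ∘ₗ (ε k D).toLinearMap)) Z
          = (epsR k D Z) ⊗ₜ[k] (1 : D) := by
      intro Z
      induction Z using TensorProduct.induction_on with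
      | zero => simp
      | add x y hx hy =>
          simp only [map_add, LinearMap.add_apply, add_mul, mul_add, TensorProduct.add_tmul,
            TensorProduct.tmul_add, smul_add]
          rw [hx, hy]
      | tmul x y =>
        rw [TensorProduct.map_tmul, epsR_tmul]
        simp only [LinearMap.coe_comp, Function.comp_apply, LinearMap.id_coe, id_eq,
          Algebra.linearMap_apply, AlgHom.toLinearMap_apply, Algebra.algebraMap_eq_smul_one,
          TensorProduct.tmul_smul, TensorProduct.smul_tmul']
    rw [e1, hepsRinv, ← Algebra.TensorProduct.one_def] at h0
    have h1 : (TensorProduct.map LinearMap.id (γ k D)) Θinv * Θinv = 1 := h0.symm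
    calc (TensorProduct.map LinearMap.id (γ k D)) Θinv
        = (TensorProduct.map LinearMap.id (γ k D)) Θinv * (Θinv * Θ) := by
          rw [hΘinv', mul_one]
      _ = ((TensorProduct.map LinearMap.id (γ k D)) Θinv * Θinv) * Θ := (mul_assoc _ _ _).symm
      _ = Θ := by rw [h1, one_mul]
  have hSS : (TensorProduct.map (γ k D) (γ k D)) Θ = Θ := by
    have hcomp : (TensorProduct.map LinearMap.id (γ k D)) ∘ₗ
        (TensorProduct.map (γ k D) LinearMap.id) = TensorProduct.map (γ k D) (γ k D) := by
      rw [← TensorProduct.map_comp]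
      simp
    calc (TensorProduct.map (γ k D) (γ k D)) Θ
        = ((TensorProduct.map LinearMap.id (γ k D)) ∘ₗ
            (TensorProduct.map (γ k D) LinearMap.id)) Θ := by rw [hcomp]
      _ = (TensorProduct.map LinearMap.id (γ k D)) ((TensorProduct.map (γ k D) LinearMap.id) Θ) :=
          rfl
      _ = Θ := by rw [hSid, hidSinv]
  -- ## Step 4 : u x = γ² x * u
  have hA : ∀ (X : D ⊗[k] D) (c d : D),
      Ψ₂ (X * (c ⊗ₜ[k] d)) = γ k D d * (Ψ₂ X * c) := by
    intro X c d
    induction X using TensorProduct.induction_on with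
    | zero => simp [zero_mul]
    | add x y hx hy =>
        simp only [map_add, LinearMap.add_apply, add_mul, mul_add, TensorProduct.add_tmul,
          TensorProduct.tmul_add, smul_add]
        rw [hx, hy]
    | tmul p q =>
      rw [Algebra.TensorProduct.tmul_mul_tmul, Ψ₂_tmul, Ψ₂_tmul, hSmul]
      rw [mul_assoc, ← mul_assoc (γ k D q)]
  have hB : ∀ (x : D) (X : D ⊗[k] D),
      Ψ₂ (τ (Δ k D x) * X) = ε k D x • Ψ₂ X := by
    intro x X
    induction X using TensorProduct.induction_on with
    | zero => simp [mul_zero]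
    | add w z hw hz =>
        simp only [map_add, LinearMap.add_apply, add_mul, mul_add, TensorProduct.add_tmul,
          TensorProduct.tmul_add, smul_add]
        rw [hw, hz]
    | tmul p q =>
      rw [commEq, hΔapp, ← (Coalgebra.Repr.arbitrary k x).eq, map_sum, Finset.sum_mul, map_sum]
      have e1 : ∀ i ∈ (Coalgebra.Repr.arbitrary k x).index,
          Ψ₂ ((TensorProduct.comm k D D) ((Coalgebra.Repr.arbitrary k x).left i ⊗ₜ[k] (Coalgebra.Repr.arbitrary k x).right i) * (p ⊗ₜ[k] q))
          = γ k D q * ((γ k D ((Coalgebra.Repr.arbitrary k x).left i) * (Coalgebra.Repr.arbitrary k x).right i) * p) := by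
        intro i _
        rw [TensorProduct.comm_tmul, Algebra.TensorProduct.tmul_mul_tmul, Ψ₂_tmul, hSmul]
        rw [mul_assoc, ← mul_assoc (γ k D ((Coalgebra.Repr.arbitrary k x).left i))]
      rw [Finset.sum_congr rfl e1, ← Finset.mul_sum, ← Finset.sum_mul]
      have e2 : ∑ i ∈ (Coalgebra.Repr.arbitrary k x).index, γ k D ((Coalgebra.Repr.arbitrary k x).left i) * (Coalgebra.Repr.arbitrary k x).right i
          = ε k D x • 1 := by
        simp only [hγ, hεapp]
        exact HopfAlgebra.sum_antipode_mul_eq_smul (Coalgebra.Repr.arbitrary k x)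
      rw [e2, smul_mul_assoc, one_mul, mul_smul_comm, Ψ₂_tmul]
  have hid1 : ∀ (x : D) (r : Coalgebra.Repr k x (D × D)),
      ∑ i ∈ r.index, γ k D (r.right i) * (u * r.left i) = ε k D x • u := by
    intro x r
    have h0 := congrArg Ψ₂ (hcom x)
    have hL : Ψ₂ (Θ * Δ k D x)
        = ∑ i ∈ r.index, γ k D (r.right i) * (Ψ₂ Θ * r.left i) := by
      rw [hΔapp, ← r.eq, Finset.mul_sum, map_sum]
      exact Finset.sum_congr rfl fun i _ => hA Θ (r.left i) (r.right i)
    have hR : Ψ₂ ((Algebra.TensorProduct.comm k D D) (Δ k D x) * Θ) = ε k D x • Ψ₂ Θ := hB x Θ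
    rw [hL, hR, ← hu] at h0
    exact h0
  have hux : ∀ x : D, u * x = γ k D (γ k D x) * u := by
    intro x
    have bridge := Stmt18Aux.assoc3 ((Stmt18Aux.mul3 k D) ∘ₗ
        (TensorProduct.map ((γ k D) ∘ₗ (γ k D))
          (TensorProduct.map (γ k D) (LinearMap.mulLeft k u))) ∘ₗ
        (TensorProduct.assoc k D D D).toLinearMap ∘ₗ
        (TensorProduct.comm k D (D ⊗[k] D)).toLinearMap ∘ₗ
        (LinearMap.lTensor D (TensorProduct.comm k D D).toLinearMap))
      (Coalgebra.Repr.arbitrary k x) (fun i => Coalgebra.Repr.arbitrary k ((Coalgebra.Repr.arbitrary k x).left i)) (fun i => Coalgebra.Repr.arbitrary k ((Coalgebra.Repr.arbitrary k x).right i))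
    have ω_tmul : ∀ z₁ z₂ z₃ : D,
        ((Stmt18Aux.mul3 k D) ∘ₗ
          (TensorProduct.map ((γ k D) ∘ₗ (γ k D))
            (TensorProduct.map (γ k D) (LinearMap.mulLeft k u))) ∘ₗ
          (TensorProduct.assoc k D D D).toLinearMap ∘ₗ
          (TensorProduct.comm k D (D ⊗[k] D)).toLinearMap ∘ₗ
          (LinearMap.lTensor D (TensorProduct.comm k D D).toLinearMap))
          (z₁ ⊗ₜ[k] (z₂ ⊗ₜ[k] z₃))
        = γ k D (γ k D z₃) * (γ k D z₂ * (u * z₁)) := by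
      intro z₁ z₂ z₃
      simp [Stmt18Aux.mul3_tmul]
    rw [Finset.sum_congr rfl (fun i _ => Finset.sum_congr rfl fun p _ => ω_tmul _ _ _),
      Finset.sum_congr rfl (fun i _ => Finset.sum_congr rfl fun p _ => ω_tmul _ _ _)] at bridge
    have way1 : ∑ i ∈ (Coalgebra.Repr.arbitrary k x).index, ∑ p ∈ (Coalgebra.Repr.arbitrary k ((Coalgebra.Repr.arbitrary k x).right i)).index,
        γ k D (γ k D ((Coalgebra.Repr.arbitrary k ((Coalgebra.Repr.arbitrary k x).right i)).right p)) *
          (γ k D ((Coalgebra.Repr.arbitrary k ((Coalgebra.Repr.arbitrary k x).right i)).left p) * (u * (Coalgebra.Repr.arbitrary k x).left i))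
        = u * x := by
      have e1 : ∀ i ∈ (Coalgebra.Repr.arbitrary k x).index,
          (∑ p ∈ (Coalgebra.Repr.arbitrary k ((Coalgebra.Repr.arbitrary k x).right i)).index,
            γ k D (γ k D ((Coalgebra.Repr.arbitrary k ((Coalgebra.Repr.arbitrary k x).right i)).right p)) *
              (γ k D ((Coalgebra.Repr.arbitrary k ((Coalgebra.Repr.arbitrary k x).right i)).left p) * (u * (Coalgebra.Repr.arbitrary k x).left i)))
          = ε k D ((Coalgebra.Repr.arbitrary k x).right i) • (u * (Coalgebra.Repr.arbitrary k x).left i) := by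
        intro i _
        have e2 : ∀ p ∈ (Coalgebra.Repr.arbitrary k ((Coalgebra.Repr.arbitrary k x).right i)).index,
            γ k D (γ k D ((Coalgebra.Repr.arbitrary k ((Coalgebra.Repr.arbitrary k x).right i)).right p)) *
              (γ k D ((Coalgebra.Repr.arbitrary k ((Coalgebra.Repr.arbitrary k x).right i)).left p) * (u * (Coalgebra.Repr.arbitrary k x).left i))
            = γ k D ((Coalgebra.Repr.arbitrary k ((Coalgebra.Repr.arbitrary k x).right i)).left p *
                γ k D ((Coalgebra.Repr.arbitrary k ((Coalgebra.Repr.arbitrary k x).right i)).right p)) * (u * (Coalgebra.Repr.arbitrary k x).left i) := by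
          intro p _
          rw [hSmul, mul_assoc]
        rw [Finset.sum_congr rfl e2, ← Finset.sum_mul, ← map_sum]
        have e3 : ∑ p ∈ (Coalgebra.Repr.arbitrary k ((Coalgebra.Repr.arbitrary k x).right i)).index,
            (Coalgebra.Repr.arbitrary k ((Coalgebra.Repr.arbitrary k x).right i)).left p * γ k D ((Coalgebra.Repr.arbitrary k ((Coalgebra.Repr.arbitrary k x).right i)).right p)
            = ε k D ((Coalgebra.Repr.arbitrary k x).right i) • 1 := by
          simp only [hγ, hεapp]
          exact HopfAlgebra.sum_mul_antipode_eq_smul (Coalgebra.Repr.arbitrary k ((Coalgebra.Repr.arbitrary k x).right i))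
        rw [e3, map_smul, hS1, smul_mul_assoc, one_mul]
      rw [Finset.sum_congr rfl e1]
      have e4 : ∀ i ∈ (Coalgebra.Repr.arbitrary k x).index,
          ε k D ((Coalgebra.Repr.arbitrary k x).right i) • (u * (Coalgebra.Repr.arbitrary k x).left i)
          = u * (ε k D ((Coalgebra.Repr.arbitrary k x).right i) • (Coalgebra.Repr.arbitrary k x).left i) := by
        intro i _; rw [mul_smul_comm]
      rw [Finset.sum_congr rfl e4, ← Finset.mul_sum]
      congr 1
      simp only [hεapp]
      exact Stmt18Aux.sum_counit_right_smul (Coalgebra.Repr.arbitrary k x)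
    have way2 : ∑ i ∈ (Coalgebra.Repr.arbitrary k x).index, ∑ p ∈ (Coalgebra.Repr.arbitrary k ((Coalgebra.Repr.arbitrary k x).left i)).index,
        γ k D (γ k D ((Coalgebra.Repr.arbitrary k x).right i)) *
          (γ k D ((Coalgebra.Repr.arbitrary k ((Coalgebra.Repr.arbitrary k x).left i)).right p) * (u * (Coalgebra.Repr.arbitrary k ((Coalgebra.Repr.arbitrary k x).left i)).left p))
        = γ k D (γ k D x) * u := by
      have e1 : ∀ i ∈ (Coalgebra.Repr.arbitrary k x).index,
          (∑ p ∈ (Coalgebra.Repr.arbitrary k ((Coalgebra.Repr.arbitrary k x).left i)).index,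
            γ k D (γ k D ((Coalgebra.Repr.arbitrary k x).right i)) *
              (γ k D ((Coalgebra.Repr.arbitrary k ((Coalgebra.Repr.arbitrary k x).left i)).right p) *
                (u * (Coalgebra.Repr.arbitrary k ((Coalgebra.Repr.arbitrary k x).left i)).left p)))
          = ε k D ((Coalgebra.Repr.arbitrary k x).left i) • (γ k D (γ k D ((Coalgebra.Repr.arbitrary k x).right i)) * u) := by
        intro i _
        rw [← Finset.mul_sum, hid1 ((Coalgebra.Repr.arbitrary k x).left i) (Coalgebra.Repr.arbitrary k ((Coalgebra.Repr.arbitrary k x).left i)), mul_smul_comm]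
      rw [Finset.sum_congr rfl e1]
      have e4 : ∀ i ∈ (Coalgebra.Repr.arbitrary k x).index,
          ε k D ((Coalgebra.Repr.arbitrary k x).left i) • (γ k D (γ k D ((Coalgebra.Repr.arbitrary k x).right i)) * u)
          = (γ k D (γ k D (ε k D ((Coalgebra.Repr.arbitrary k x).left i) • (Coalgebra.Repr.arbitrary k x).right i))) * u := by
        intro i _; rw [map_smul, map_smul, smul_mul_assoc]
      have e5 : ∑ i ∈ (Coalgebra.Repr.arbitrary k x).index,
          ε k D ((Coalgebra.Repr.arbitrary k x).left i) • (Coalgebra.Repr.arbitrary k x).right i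
          = x := by
        simp only [hεapp]
        exact Stmt18Aux.sum_counit_left_smul (Coalgebra.Repr.arbitrary k x)
      rw [Finset.sum_congr rfl e4, ← Finset.sum_mul, ← map_sum, ← map_sum, e5]
    rw [← way1, ← way2]
    exact bridge
  -- ## Step 5 : the Drinfeld coproduct identity
  set ΔS : D →ₗ[k] D ⊗[k] D := (Coalgebra.comul (R := k)) ∘ₗ (γ k D) with hΔS
  have ΔS_apply : ∀ y : D, ΔS y = Δ k D (γ k D y) := fun y => rfl
  set xto1 : D →ₗ[k] D ⊗[k] D := (TensorProduct.mk k D D).flip 1 with hxto1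
  have xto1_apply : ∀ a : D, xto1 a = a ⊗ₜ[k] (1 : D) := fun a => rfl
  set mk1 : D →ₗ[k] D ⊗[k] D := TensorProduct.mk k D D 1 with hmk1
  have mk1_apply : ∀ a : D, mk1 a = (1 : D) ⊗ₜ[k] a := fun a => rfl
  set Φ₂ : D ⊗[k] (D ⊗[k] D) →ₗ[k] D ⊗[k] D :=
    (LinearMap.mul' k (D ⊗[k] D)) ∘ₗ (TensorProduct.map ΔS LinearMap.id) ∘ₗ
      (TensorProduct.comm k (D ⊗[k] D) D).toLinearMap ∘ₗ
      (TensorProduct.assoc k D D D).symm.toLinearMap with hΦ₂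
  have Φ₂_tmul : ∀ x y z : D, Φ₂ (x ⊗ₜ[k] (y ⊗ₜ[k] z)) = ΔS z * (x ⊗ₜ[k] y) := by
    intro x y z; simp [hΦ₂]
  set C : D ⊗[k] D →ₗ[k] D ⊗[k] D :=
    (LinearMap.mul' k (D ⊗[k] D)) ∘ₗ (TensorProduct.map ΔS xto1) ∘ₗ
      (TensorProduct.comm k D D).toLinearMap with hC
  have C_tmul : ∀ a b : D, C (a ⊗ₜ[k] b) = ΔS b * (a ⊗ₜ[k] (1 : D)) := by
    intro a b; simp [hC, xto1_apply]
  set C₂ : D ⊗[k] (D ⊗[k] D) →ₗ[k] D ⊗[k] D :=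
    (TensorProduct.map Ψ₂ (γ k D)) ∘ₗ (TensorProduct.assoc k D D D).symm.toLinearMap ∘ₗ
      (LinearMap.lTensor D (TensorProduct.comm k D D).toLinearMap) with hC₂
  have C₂_tmul : ∀ x y₁ y₂ : D,
      C₂ (x ⊗ₜ[k] (y₁ ⊗ₜ[k] y₂)) = (γ k D y₂ * x) ⊗ₜ[k] γ k D y₁ := by
    intro x y₁ y₂; simp [hC₂, Ψ₂_tmul]
  set D₁ : D ⊗[k] D →ₗ[k] D ⊗[k] D :=
    (LinearMap.mul' k (D ⊗[k] D)) ∘ₗ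
      (TensorProduct.map ((TensorProduct.map (γ k D) (γ k D)) ∘ₗ (Coalgebra.comul (R := k)))
        mk1) ∘ₗ (TensorProduct.comm k D D).toLinearMap with hD₁
  have D₁_tmul : ∀ a b : D,
      D₁ (a ⊗ₜ[k] b) = (TensorProduct.map (γ k D) (γ k D)) (Coalgebra.comul (R := k) b) *
        ((1 : D) ⊗ₜ[k] a) := by
    intro a b; simp [hD₁, mk1_apply]
  set D₂ : D ⊗[k] (D ⊗[k] D) →ₗ[k] D ⊗[k] D :=
    (TensorProduct.map (γ k D) Ψ₂) ∘ₗ (TensorProduct.leftComm k D D D).toLinearMap with hD₂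
  have D₂_tmul : ∀ x y₁ y₂ : D,
      D₂ (x ⊗ₜ[k] (y₁ ⊗ₜ[k] y₂)) = γ k D y₁ ⊗ₜ[k] (γ k D y₂ * x) := by
    intro x y₁ y₂; simp [hD₂, Ψ₂_tmul, TensorProduct.leftComm_tmul]
  set χ : (D ⊗[k] D) ⊗[k] (D ⊗[k] D) →ₗ[k] D ⊗[k] D :=
    (Stmt18Aux.mul3 k (D ⊗[k] D)) ∘ₗ
      (TensorProduct.map ΔS (TensorProduct.map LinearMap.id mk1)) ∘ₗ
      (LinearMap.lTensor D (TensorProduct.comm k D (D ⊗[k] D)).toLinearMap) ∘ₗ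
      (TensorProduct.assoc k D D (D ⊗[k] D)).toLinearMap ∘ₗ
      (LinearMap.rTensor (D ⊗[k] D) (TensorProduct.comm k D D).toLinearMap) with hχ
  have χ_tmul : ∀ (a' b' : D) (Z : D ⊗[k] D),
      χ ((a' ⊗ₜ[k] b') ⊗ₜ[k] Z) = ΔS b' * (Z * ((1 : D) ⊗ₜ[k] a')) := by
    intro a' b' Z
    simp [hχ, mk1_apply, Stmt18Aux.mul3_tmul]
  -- (p1) Δ u = Φ₂ (ι13 Θ * ι23 Θ)
  have hΦcomulId : ∀ Z : D ⊗[k] D, Φ₂ (comulId k D Z) = Δ k D (Ψ₂ Z) := by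
    intro Z
    induction Z using TensorProduct.induction_on with
    | zero => simp
    | add x y hx hy =>
        simp only [map_add, LinearMap.add_apply, add_mul, mul_add, TensorProduct.add_tmul,
          TensorProduct.tmul_add, smul_add]
        rw [hx, hy]
    | tmul x y =>
      have e0 : ∀ w : D ⊗[k] D, Φ₂ ((Algebra.TensorProduct.assoc k k k D D D) (w ⊗ₜ[k] y))
          = ΔS y * w := by
        intro w
        induction w using TensorProduct.induction_on with
        | zero => simp
        | add s t hs ht =>
            simp only [map_add, LinearMap.add_apply, add_mul, mul_add, TensorProduct.add_tmul,
              TensorProduct.tmul_add, smul_add]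
            rw [hs, ht]
        | tmul s t => rw [Algebra.TensorProduct.assoc_tmul, Φ₂_tmul]
      rw [hcomulId_tmul, e0, Ψ₂_tmul, map_mul, ΔS_apply]
  have hp1 : Δ k D u = Φ₂ (ι13 k D Θ * ι23 k D Θ) := by
    rw [← hΘ1, hΦcomulId, hu]
  -- (p2) Φ₂ (ι13 X * ι23 Y) = χ (Y ⊗ (C X))
  have hΦι : ∀ X Y : D ⊗[k] D,
      Φ₂ (ι13 k D X * ι23 k D Y) = χ (Y ⊗ₜ[k] (C X)) := by
    intro X Y
    induction X using TensorProduct.induction_on with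
    | zero => simp [zero_mul, TensorProduct.tmul_zero]
    | add x y hx hy =>
        simp only [map_add, LinearMap.add_apply, add_mul, mul_add, TensorProduct.add_tmul,
          TensorProduct.tmul_add, smul_add]
        rw [hx, hy]
    | tmul a b =>
      induction Y using TensorProduct.induction_on with
      | zero => simp [mul_zero, TensorProduct.zero_tmul]
      | add x y hx hy =>
          simp only [map_add, LinearMap.add_apply, add_mul, mul_add, TensorProduct.add_tmul,
            TensorProduct.tmul_add, smul_add]
          rw [hx, hy]
      | tmul a' b' =>
        rw [hι13_tmul, hι23_tmul, Algebra.TensorProduct.tmul_mul_tmul,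
          Algebra.TensorProduct.tmul_mul_tmul, one_mul, mul_one, Φ₂_tmul, χ_tmul, C_tmul]
        have e1 : ΔS (b * b') = ΔS b' * ΔS b := by
          rw [ΔS_apply, ΔS_apply, ΔS_apply, hSmul, map_mul]
        rw [e1]
        have e2 : (a ⊗ₜ[k] a' : D ⊗[k] D) = (a ⊗ₜ[k] (1 : D)) * ((1 : D) ⊗ₜ[k] a') := by
          rw [Algebra.TensorProduct.tmul_mul_tmul, mul_one, one_mul]
        rw [e2, mul_assoc, mul_assoc]
  -- (p3) C Θ = (u ⊗ 1) * (id ⊗ γ) Θ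
  have hCC₂ : ∀ Z : D ⊗[k] D, C Z = C₂ (idComul k D Z) := by
    intro Z
    induction Z using TensorProduct.induction_on with
    | zero => simp
    | add x y hx hy =>
        simp only [map_add, LinearMap.add_apply, add_mul, mul_add, TensorProduct.add_tmul,
          TensorProduct.tmul_add, smul_add]
        rw [hx, hy]
    | tmul a b =>
      rw [C_tmul, hidComul_tmul, ΔS_apply, hΔapp (γ k D b), hH4, hΔapp b,
        ← (Coalgebra.Repr.arbitrary k b).eq]
      rw [map_sum, map_sum, Finset.sum_mul, TensorProduct.tmul_sum, map_sum]
      refine Finset.sum_congr rfl fun i _ => ?_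
      rw [TensorProduct.map_tmul, TensorProduct.comm_tmul, Algebra.TensorProduct.tmul_mul_tmul,
        C₂_tmul, mul_one]
  have hC₂ι : ∀ X Y : D ⊗[k] D,
      C₂ (ι13 k D X * ι12 k D Y) = (Ψ₂ X ⊗ₜ[k] (1 : D)) * (TensorProduct.map LinearMap.id (γ k D) Y) := by
    intro X Y
    induction X using TensorProduct.induction_on with
    | zero => simp [zero_mul, TensorProduct.zero_tmul]
    | add x y hx hy =>
        simp only [map_add, LinearMap.add_apply, add_mul, mul_add, TensorProduct.add_tmul,
          TensorProduct.tmul_add, smul_add]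
        rw [hx, hy]
    | tmul a b =>
      induction Y using TensorProduct.induction_on with
      | zero => simp [mul_zero]
      | add x y hx hy =>
          simp only [map_add, LinearMap.add_apply, add_mul, mul_add, TensorProduct.add_tmul,
            TensorProduct.tmul_add, smul_add]
          rw [hx, hy]
      | tmul c d =>
        rw [hι13_tmul, hι12_tmul, Algebra.TensorProduct.tmul_mul_tmul,
          Algebra.TensorProduct.tmul_mul_tmul, one_mul, mul_one, C₂_tmul,
          TensorProduct.map_tmul, Ψ₂_tmul, Algebra.TensorProduct.tmul_mul_tmul]
        rw [mul_assoc, one_mul]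
        rfl
  have hCΘ : C Θ = (u ⊗ₜ[k] (1 : D)) * (TensorProduct.map LinearMap.id (γ k D) Θ) := by
    rw [hCC₂ Θ, hΘ2, hC₂ι, ← hu]
  -- (p4) commutation of τΘ * Θ with coproducts
  have hA2 : ∀ x : D, τ Θ * τ (Δ k D x) = Δ k D x * τ Θ := by
    intro x
    have h0 := congrArg τ (hcom x)
    rw [map_mul, map_mul, hττ] at h0
    exact h0
  have hK : ∀ x : D, (τ Θ * Θ) * Δ k D x = Δ k D x * (τ Θ * Θ) := by
    intro x
    calc (τ Θ * Θ) * Δ k D x = τ Θ * (Θ * Δ k D x) := mul_assoc _ _ _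
      _ = τ Θ * (τ (Δ k D x) * Θ) := by rw [hcom, hτ]
      _ = (τ Θ * τ (Δ k D x)) * Θ := (mul_assoc _ _ _).symm
      _ = (Δ k D x * τ Θ) * Θ := by rw [hA2]
      _ = Δ k D x * (τ Θ * Θ) := mul_assoc _ _ _
  -- (p5)
  have hχK : ∀ (Y Z : D ⊗[k] D),
      (τ Θ * Θ) * χ (Y ⊗ₜ[k] Z) = χ (Y ⊗ₜ[k] ((τ Θ * Θ) * Z)) := by
    intro Y Z
    induction Y using TensorProduct.induction_on with
    | zero => simp [TensorProduct.zero_tmul, mul_zero]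
    | add x y hx hy =>
        simp only [map_add, LinearMap.add_apply, add_mul, mul_add, TensorProduct.add_tmul,
          TensorProduct.tmul_add, smul_add]
        rw [hx, hy]
    | tmul a' b' =>
      rw [χ_tmul, χ_tmul, ΔS_apply, ← mul_assoc, hK (γ k D b')]
      simp only [mul_assoc]
  -- (p6) Θ * ((u ⊗ 1) * (id ⊗ γ) Θ) = u ⊗ 1
  have hmove : ∀ X : D ⊗[k] D,
      (u ⊗ₜ[k] (1 : D)) * (TensorProduct.map LinearMap.id (γ k D)) X
        = (TensorProduct.map ((γ k D) ∘ₗ (γ k D)) (γ k D)) X * (u ⊗ₜ[k] (1 : D)) := by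
    intro X
    induction X using TensorProduct.induction_on with
    | zero => simp
    | add x y hx hy =>
        simp only [map_add, LinearMap.add_apply, add_mul, mul_add, TensorProduct.add_tmul,
          TensorProduct.tmul_add, smul_add]
        rw [hx, hy]
    | tmul w x =>
      simp only [TensorProduct.map_tmul, LinearMap.id_coe, id_eq, LinearMap.coe_comp,
        Function.comp_apply, Algebra.TensorProduct.tmul_mul_tmul, one_mul, mul_one]
      rw [hux w]
  have hSSγ : (TensorProduct.map ((γ k D) ∘ₗ (γ k D)) (γ k D)) Θ = Θinv := by
    have hcomp : (TensorProduct.map ((γ k D) ∘ₗ (γ k D)) (γ k D))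
        = (TensorProduct.map (γ k D) LinearMap.id) ∘ₗ (TensorProduct.map (γ k D) (γ k D)) := by
      rw [← TensorProduct.map_comp]
      simp
    rw [hcomp]
    show (TensorProduct.map (γ k D) LinearMap.id) ((TensorProduct.map (γ k D) (γ k D)) Θ) = Θinv
    rw [hSS, hSid]
  have hg1 : Θ * ((u ⊗ₜ[k] (1 : D)) * (TensorProduct.map LinearMap.id (γ k D)) Θ)
      = u ⊗ₜ[k] (1 : D) := by
    rw [hmove, hSSγ, ← mul_assoc, hΘinv, one_mul]
  -- (p7) χ (Θ ⊗ τ Θ) = 1 ⊗ u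
  have hDcc : ∀ Z : D ⊗[k] D,
      (TensorProduct.comm k D D) ((TensorProduct.comm k D D) Z) = Z := by
    intro Z
    induction Z using TensorProduct.induction_on with
    | zero => simp
    | tmul x y => simp
    | add x y hx hy =>
        simp only [map_add, LinearMap.add_apply, add_mul, mul_add, TensorProduct.add_tmul,
          TensorProduct.tmul_add, smul_add]
        rw [hx, hy]
  have hχτ : ∀ Y : D ⊗[k] D, χ (Y ⊗ₜ[k] (τ Θ)) = τ Θ * D₁ Y := by
    intro Y
    induction Y using TensorProduct.induction_on with
    | zero => simp [TensorProduct.zero_tmul, mul_zero]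
    | add x y hx hy =>
        simp only [map_add, LinearMap.add_apply, add_mul, mul_add, TensorProduct.add_tmul,
          TensorProduct.tmul_add, smul_add]
        rw [hx, hy]
    | tmul a' b' =>
      have e1 : τ (Δ k D (γ k D b'))
          = (TensorProduct.map (γ k D) (γ k D)) (Coalgebra.comul (R := k) b') := by
        rw [commEq, hΔapp, hH4, hDcc]
      calc χ ((a' ⊗ₜ[k] b') ⊗ₜ[k] (τ Θ)) = ΔS b' * (τ Θ * ((1 : D) ⊗ₜ[k] a')) := χ_tmul _ _ _
        _ = (Δ k D (γ k D b') * τ Θ) * ((1 : D) ⊗ₜ[k] a') := by rw [ΔS_apply, mul_assoc]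
        _ = (τ Θ * τ (Δ k D (γ k D b'))) * ((1 : D) ⊗ₜ[k] a') := by rw [hA2]
        _ = τ Θ * ((TensorProduct.map (γ k D) (γ k D)) (Coalgebra.comul (R := k) b') *
              ((1 : D) ⊗ₜ[k] a')) := by rw [e1, mul_assoc]
        _ = τ Θ * D₁ (a' ⊗ₜ[k] b') := by rw [D₁_tmul]
  have hD₁D₂ : ∀ Z : D ⊗[k] D, D₁ Z = D₂ (idComul k D Z) := by
    intro Z
    induction Z using TensorProduct.induction_on with
    | zero => simp
    | add x y hx hy =>
        simp only [map_add, LinearMap.add_apply, add_mul, mul_add, TensorProduct.add_tmul,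
          TensorProduct.tmul_add, smul_add]
        rw [hx, hy]
    | tmul a b =>
      rw [D₁_tmul, hidComul_tmul, hΔapp b, ← (Coalgebra.Repr.arbitrary k b).eq]
      rw [map_sum, Finset.sum_mul, TensorProduct.tmul_sum, map_sum]
      refine Finset.sum_congr rfl fun i _ => ?_
      rw [TensorProduct.map_tmul, Algebra.TensorProduct.tmul_mul_tmul, D₂_tmul, mul_one]
  have hD₂ι : ∀ X Y : D ⊗[k] D,
      D₂ (ι13 k D X * ι12 k D Y)
        = ((1 : D) ⊗ₜ[k] Ψ₂ X) * (TensorProduct.map (γ k D) LinearMap.id) (τ Y) := by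
    intro X Y
    induction X using TensorProduct.induction_on with
    | zero => simp [zero_mul, TensorProduct.tmul_zero]
    | add x y hx hy =>
        simp only [map_add, LinearMap.add_apply, add_mul, mul_add, TensorProduct.add_tmul,
          TensorProduct.tmul_add, smul_add]
        rw [hx, hy]
    | tmul a b =>
      induction Y using TensorProduct.induction_on with
      | zero => simp [mul_zero]
      | add x y hx hy =>
          simp only [map_add, LinearMap.add_apply, add_mul, mul_add, TensorProduct.add_tmul,
            TensorProduct.tmul_add, smul_add]
          rw [hx, hy]
      | tmul c d =>
        rw [hι13_tmul, hι12_tmul, Algebra.TensorProduct.tmul_mul_tmul,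
          Algebra.TensorProduct.tmul_mul_tmul, one_mul, mul_one, D₂_tmul, Ψ₂_tmul]
        rw [hτ, Algebra.TensorProduct.comm_tmul, TensorProduct.map_tmul,
          Algebra.TensorProduct.tmul_mul_tmul, one_mul]
        rw [mul_assoc]
        rfl
  have hD₁Θ : D₁ Θ = ((1 : D) ⊗ₜ[k] u) * (TensorProduct.map (γ k D) LinearMap.id) (τ Θ) := by
    rw [hD₁D₂ Θ, hΘ2, hD₂ι, ← hu]
  have hmove2 : ∀ X : D ⊗[k] D,
      ((1 : D) ⊗ₜ[k] u) * (TensorProduct.map (γ k D) LinearMap.id) X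
        = (TensorProduct.map (γ k D) ((γ k D) ∘ₗ (γ k D))) X * ((1 : D) ⊗ₜ[k] u) := by
    intro X
    induction X using TensorProduct.induction_on with
    | zero => simp
    | add x y hx hy =>
        simp only [map_add, LinearMap.add_apply, add_mul, mul_add, TensorProduct.add_tmul,
          TensorProduct.tmul_add, smul_add]
        rw [hx, hy]
    | tmul w x =>
      simp only [TensorProduct.map_tmul, LinearMap.id_coe, id_eq, LinearMap.coe_comp,
        Function.comp_apply, Algebra.TensorProduct.tmul_mul_tmul, one_mul, mul_one]
      rw [hux x]
  have hmapcommγ : (TensorProduct.map (γ k D) ((γ k D) ∘ₗ (γ k D))) (τ Θ) = τ Θinv := by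
    have e1 : ∀ X : D ⊗[k] D,
        (TensorProduct.map (γ k D) ((γ k D) ∘ₗ (γ k D))) (τ X)
          = τ ((TensorProduct.map ((γ k D) ∘ₗ (γ k D)) (γ k D)) X) := by
      intro X
      induction X using TensorProduct.induction_on with
      | zero => simp
      | add x y hx hy =>
          simp only [map_add, LinearMap.add_apply, add_mul, mul_add, TensorProduct.add_tmul,
            TensorProduct.tmul_add, smul_add]
          rw [hx, hy]
      | tmul x y => rw [hτ, Algebra.TensorProduct.comm_tmul, TensorProduct.map_tmul,
          TensorProduct.map_tmul, Algebra.TensorProduct.comm_tmul]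
    rw [e1, hSSγ]
  have hχΘτΘ : χ (Θ ⊗ₜ[k] (τ Θ)) = (1 : D) ⊗ₜ[k] u := by
    rw [hχτ, hD₁Θ, hmove2, hmapcommγ, ← mul_assoc, ← map_mul, hΘinv, map_one, one_mul]
  -- (p8)
  have hχu : ∀ (Y Z : D ⊗[k] D),
      χ (Y ⊗ₜ[k] (Z * (u ⊗ₜ[k] (1 : D)))) = χ (Y ⊗ₜ[k] Z) * (u ⊗ₜ[k] (1 : D)) := by
    intro Y Z
    induction Y using TensorProduct.induction_on with
    | zero => simp [TensorProduct.zero_tmul]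
    | add x y hx hy =>
        simp only [map_add, LinearMap.add_apply, add_mul, mul_add, TensorProduct.add_tmul,
          TensorProduct.tmul_add, smul_add]
        rw [hx, hy]
    | tmul a' b' =>
      rw [χ_tmul, χ_tmul]
      have e1 : (Z * (u ⊗ₜ[k] (1 : D))) * ((1 : D) ⊗ₜ[k] a')
          = (Z * ((1 : D) ⊗ₜ[k] a')) * (u ⊗ₜ[k] (1 : D)) := by
        rw [mul_assoc, mul_assoc, Algebra.TensorProduct.tmul_mul_tmul,
          Algebra.TensorProduct.tmul_mul_tmul, mul_one, one_mul, one_mul, mul_one]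
      rw [e1, ← mul_assoc, ← mul_assoc]
  -- the Drinfeld identity
  have hP : (τ Θ * Θ) * Δ k D u = u ⊗ₜ[k] u := by
    calc (τ Θ * Θ) * Δ k D u = (τ Θ * Θ) * χ (Θ ⊗ₜ[k] (C Θ)) := by rw [hp1, hΦι]
      _ = χ (Θ ⊗ₜ[k] ((τ Θ * Θ) * C Θ)) := hχK _ _
      _ = χ (Θ ⊗ₜ[k] (τ Θ * (u ⊗ₜ[k] (1 : D)))) := by
          rw [hCΘ, mul_assoc, hg1]
      _ = χ (Θ ⊗ₜ[k] ((τ Θ) * (u ⊗ₜ[k] (1 : D)))) := rfl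
      _ = χ (Θ ⊗ₜ[k] (τ Θ)) * (u ⊗ₜ[k] (1 : D)) := hχu _ _
      _ = ((1 : D) ⊗ₜ[k] u) * (u ⊗ₜ[k] (1 : D)) := by rw [hχΘτΘ]
      _ = u ⊗ₜ[k] u := by
          rw [Algebra.TensorProduct.tmul_mul_tmul, one_mul, mul_one]
  have hΔu : Δ k D u = Θinv * (τ Θinv * (u ⊗ₜ[k] u)) := by
    have e1 : τ Θinv * τ Θ = 1 := by rw [← map_mul, hΘinv', map_one]
    calc Δ k D u = Θinv * (τ Θinv * ((τ Θ * Θ) * Δ k D u)) := by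
          rw [mul_assoc (τ Θ), ← mul_assoc (τ Θinv), e1, one_mul, ← mul_assoc, hΘinv', one_mul]
      _ = Θinv * (τ Θinv * (u ⊗ₜ[k] u)) := by rw [hP]
  -- ## Step 6 : module-level conclusions
  have actT_tmul : ∀ (g h : D) (w z : L),
      actT k D L act (g ⊗ₜ[k] h) (w ⊗ₜ[k] z) = act g w ⊗ₜ[k] act h z := by
    intro g h w z
    simp [actT]
  have actT_mul : ∀ (X Y : D ⊗[k] D) (w : L ⊗[k] L),
      actT k D L act (X * Y) w = actT k D L act X (actT k D L act Y w) := by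
    intro X Y w
    induction X using TensorProduct.induction_on with
    | zero => simp [zero_mul]
    | add x y hx hy =>
        simp only [map_add, LinearMap.add_apply, add_mul, mul_add, TensorProduct.add_tmul,
          TensorProduct.tmul_add, smul_add]
        rw [hx, hy]
    | tmul g h =>
      induction Y using TensorProduct.induction_on with
      | zero => simp [mul_zero]
      | add x y hx hy =>
          simp only [map_add, LinearMap.add_apply, add_mul, mul_add, TensorProduct.add_tmul,
            TensorProduct.tmul_add, smul_add]
          rw [hx, hy]
      | tmul g' h' =>
        induction w using TensorProduct.induction_on with
        | zero => simp
        | add w z hw hz =>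
            simp only [map_add, LinearMap.add_apply, add_mul, mul_add, TensorProduct.add_tmul,
              TensorProduct.tmul_add, smul_add]
            rw [hw, hz]
        | tmul a b =>
          rw [Algebra.TensorProduct.tmul_mul_tmul, actT_tmul, actT_tmul, actT_tmul,
            hmul, hmul]
  have actT_one : ∀ w : L ⊗[k] L, actT k D L act 1 w = w := by
    intro w
    induction w using TensorProduct.induction_on with
    | zero => simp
    | add w z hw hz =>
        simp only [map_add, LinearMap.add_apply, add_mul, mul_add, TensorProduct.add_tmul,
          TensorProduct.tmul_add, smul_add]
        rw [hw, hz]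
    | tmul a b =>
      rw [Algebra.TensorProduct.one_def, actT_tmul, hone, hone]
  have flipT : ∀ (X : D ⊗[k] D) (w : L ⊗[k] L),
      (TensorProduct.comm k L L) (actT k D L act X w)
        = actT k D L act (τ X) ((TensorProduct.comm k L L) w) := by
    intro X w
    induction X using TensorProduct.induction_on with
    | zero => simp
    | add x y hx hy =>
        simp only [map_add, LinearMap.add_apply, add_mul, mul_add, TensorProduct.add_tmul,
          TensorProduct.tmul_add, smul_add]
        rw [hx, hy]
    | tmul g h =>
      induction w using TensorProduct.induction_on with
      | zero => simp
      | add w z hw hz =>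
          simp only [map_add, LinearMap.add_apply, add_mul, mul_add, TensorProduct.add_tmul,
            TensorProduct.tmul_add, smul_add]
          rw [hw, hz]
      | tmul a b =>
        rw [actT_tmul, TensorProduct.comm_tmul, TensorProduct.comm_tmul, hτ,
          Algebra.TensorProduct.comm_tmul, actT_tmul]
  have m4 : ∀ w : L ⊗[k] L,
      LinearMap.mul' k L (actT k D L act (τ Θ) w)
        = LinearMap.mul' k L ((TensorProduct.comm k L L) w) := by
    intro w
    induction w using TensorProduct.induction_on with
    | zero => simp
    | add w z hw hz =>
        simp only [map_add, LinearMap.add_apply, add_mul, mul_add, TensorProduct.add_tmul,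
          TensorProduct.tmul_add, smul_add]
        rw [hw, hz]
    | tmul lam mu =>
      rw [hτ, hΘcomm lam mu, TensorProduct.comm_tmul, LinearMap.mul'_apply]
  have m5 : ∀ w : L ⊗[k] L,
      LinearMap.mul' k L (actT k D L act Θinv w)
        = LinearMap.mul' k L ((TensorProduct.comm k L L) w) := by
    intro w
    have e1 : actT k D L act Θinv w
        = (TensorProduct.comm k L L)
            (actT k D L act (τ Θinv) ((TensorProduct.comm k L L) w)) := by
      rw [flipT, hττ, hcommcomm]
    calc LinearMap.mul' k L (actT k D L act Θinv w)
        = LinearMap.mul' k L ((TensorProduct.comm k L L)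
            (actT k D L act (τ Θinv) ((TensorProduct.comm k L L) w))) := by rw [e1]
      _ = LinearMap.mul' k L (actT k D L act (τ Θ)
            (actT k D L act (τ Θinv) ((TensorProduct.comm k L L) w))) :=
          (m4 _).symm
      _ = LinearMap.mul' k L (actT k D L act (τ Θ * τ Θinv) ((TensorProduct.comm k L L) w)) := by
          rw [actT_mul]
      _ = LinearMap.mul' k L (actT k D L act 1 ((TensorProduct.comm k L L) w)) := by
          rw [← map_mul, hΘinv, map_one]
      _ = LinearMap.mul' k L ((TensorProduct.comm k L L) w) := by rw [actT_one]
  have hmain : ∀ lam mu : L, act u (lam * mu) = act u lam * act u mu := by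
    intro lam mu
    rw [hdistr u lam mu, hΔu]
    calc LinearMap.mul' k L (actT k D L act (Θinv * (τ Θinv * (u ⊗ₜ[k] u))) (lam ⊗ₜ[k] mu))
        = LinearMap.mul' k L (actT k D L act Θinv
            (actT k D L act (τ Θinv * (u ⊗ₜ[k] u)) (lam ⊗ₜ[k] mu))) := by rw [actT_mul]
      _ = LinearMap.mul' k L ((TensorProduct.comm k L L)
            (actT k D L act (τ Θinv * (u ⊗ₜ[k] u)) (lam ⊗ₜ[k] mu))) := m5 _
      _ = LinearMap.mul' k L ((TensorProduct.comm k L L)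
            (actT k D L act (τ Θinv) (actT k D L act (u ⊗ₜ[k] u) (lam ⊗ₜ[k] mu)))) := by
          rw [actT_mul]
      _ = LinearMap.mul' k L (actT k D L act (τ Θ)
            (actT k D L act (τ Θinv) (actT k D L act (u ⊗ₜ[k] u) (lam ⊗ₜ[k] mu)))) :=
          (m4 _).symm
      _ = LinearMap.mul' k L (actT k D L act (τ Θ * τ Θinv)
            (actT k D L act (u ⊗ₜ[k] u) (lam ⊗ₜ[k] mu))) := by rw [actT_mul]
      _ = LinearMap.mul' k L (actT k D L act 1
            (actT k D L act (u ⊗ₜ[k] u) (lam ⊗ₜ[k] mu))) := by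
          rw [← map_mul, hΘinv, map_one]
      _ = LinearMap.mul' k L (actT k D L act (u ⊗ₜ[k] u) (lam ⊗ₜ[k] mu)) := by rw [actT_one]
      _ = act u lam * act u mu := by rw [actT_tmul, LinearMap.mul'_apply]
  have hεu : ε k D u = 1 := by
    have h1 : ∀ Z : D ⊗[k] D, ε k D (Ψ₂ Z) = ε k D (epsR k D Z) := by
      intro Z
      induction Z using TensorProduct.induction_on with
      | zero => simp
      | add x y hx hy =>
          simp only [map_add, LinearMap.add_apply, add_mul, mul_add, TensorProduct.add_tmul,
            TensorProduct.tmul_add, smul_add]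
          rw [hx, hy]
      | tmul x y =>
        rw [Ψ₂_tmul, map_mul, hSε, epsR_tmul, map_smul, smul_eq_mul, mul_comm]
    rw [hu, h1 Θ, hepsR, map_one]
  refine ⟨?_, hmain⟩
  rw [hunit, hεu, one_smul]

end Stmt18
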